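/- arXiv:1307.6630 — 2 statements merged into one kernel-verified Lean document; each statement's English description precedes it below -/
import Mathlib

section
/- The duality between stable symplectic and orthogonal characters: ω(s^Sp_{[λ]}) = s^O_{[λ†]}, where ω is the involution of the ring of symmetric functions sending s_ν to s_{ν†}. -/
open scoped BigOperators

/-- A partition: a weakly decreasing sequence of natural numbers with finitely many
nonzero terms. `parts` is 0-indexed: the `i`-th part is `parts i`. -/
def YPartition : Type := {f : ℕ → ℕ // Antitone f ∧ ∃ N, ∀ n, N ≤ n → f n = 0}

namespace YPartition

def parts (μ : YPartition) : ℕ → ℕ := μ.1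

lemma parts_antitone (μ : YPartition) : Antitone μ.parts := μ.2.1

@[ext] lemma ext {μ ν : YPartition} (h : ∀ n, μ.parts n = ν.parts n) : μ = ν :=
  Subtype.ext (funext h)

/-- The number of boxes of a partition. -/
noncomputable def size (μ : YPartition) : ℕ := ∑ᶠ n, μ.parts n

/-- The number of nonzero parts of a partition. -/
noncomputable def length (μ : YPartition) : ℕ := Set.ncard {n | μ.parts n ≠ 0}

/-- The transpose (conjugate) partition: `(transpose μ).parts i = #{j | μ.parts j ≥ i+1}`
(0-indexed; in 1-indexed terms, `μ†_i = #{j | μ_j ≥ i}`). -/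
noncomputable def transpose (μ : YPartition) : YPartition :=
  ⟨fun i => Set.ncard {j | i < μ.parts j},
   by
    intro a b hab
    apply Set.ncard_le_ncard
    · intro j hj
      exact lt_of_le_of_lt hab hj
    · obtain ⟨N, hN⟩ := μ.2.2
      apply Set.Finite.subset (Set.finite_Iio N)
      intro j hj
      by_contra hjN
      simp only [Set.mem_Iio, not_lt] at hjN
      have h0 : μ.parts j = 0 := hN j hjN
      simp only [Set.mem_setOf_eq, h0] at hj
      omega,
   by
    refine ⟨μ.parts 0, fun n hn => ?_⟩
    convert Set.ncard_empty ℕ using 2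
    ext j
    simp only [Set.mem_setOf_eq, Set.mem_empty_iff_false, iff_false, not_lt]
    exact le_trans (μ.parts_antitone (Nat.zero_le j)) hn⟩

/-- Containment of Young diagrams. -/
def Sub (μ lam : YPartition) : Prop := ∀ i, μ.parts i ≤ lam.parts i

/-- The empty partition. -/
def empty : YPartition := ⟨fun _ => 0, fun _ _ _ => le_rfl, ⟨0, fun _ _ => rfl⟩⟩

/-- One-row partition `(k)`. -/
def rowP (k : ℕ) : YPartition :=
  ⟨fun n => if n = 0 then k else 0,
   by intro a b hab; dsimp only; split <;> split <;> omega,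
   ⟨1, fun n hn => by dsimp only; split <;> omega⟩⟩

/-- One-column partition `(1^k)`. -/
def colP (k : ℕ) : YPartition :=
  ⟨fun n => if n < k then 1 else 0,
   by intro a b hab; dsimp only; split <;> split <;> omega,
   ⟨k, fun n hn => by dsimp only; split <;> omega⟩⟩

/-- The partition obtained by deleting the first row and the first column:
`(μ_2 - 1, μ_3 - 1, ...)`. -/
def frc (μ : YPartition) : YPartition :=
  ⟨fun n => μ.parts (n + 1) - 1,
   fun a b hab => Nat.sub_le_sub_right (μ.parts_antitone (by omega)) 1,
   by
    obtain ⟨N, hN⟩ := μ.2.2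
    exact ⟨N, fun n hn => by
      have h0 : μ.parts (n + 1) = 0 := hN (n + 1) (by omega)
      dsimp only; omega⟩⟩

/-- The partition with all parts doubled: `2η = (2η_1, 2η_2, ...)`. -/
def double (η : YPartition) : YPartition :=
  ⟨fun n => 2 * η.parts n,
   fun a b hab => by have := η.parts_antitone hab; dsimp only; omega,
   by
    obtain ⟨N, hN⟩ := η.2.2
    exact ⟨N, fun n hn => by
      have h0 : η.parts n = 0 := hN n hn
      dsimp only; omega⟩⟩

/-- The set `Q_{-1}` of partitions: the empty partition is in `Q_{-1}`, and a
(nonempty) partition `μ` is in `Q_{-1}` iff `ℓ(μ) = μ_1 + 1` and deleting the first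
row and column of `μ` gives a partition in `Q_{-1}`. -/
inductive Qneg : YPartition → Prop
  | empty : Qneg YPartition.empty
  | step (μ : YPartition) (h : μ.length = μ.parts 0 + 1) (h' : Qneg μ.frc) : Qneg μ

/-- The set `Q_1`: partitions whose transpose lies in `Q_{-1}`. -/
def Qpos (μ : YPartition) : Prop := Qneg μ.transpose

end YPartition

/-- The ring of symmetric functions `Λ = ℤ[e_1, e_2, ...]`, a polynomial ring in the
elementary symmetric functions. -/
abbrev SymF := MvPolynomial ℕ ℤ

/-- The elementary symmetric function `e_k`, extended by `e_k = 0` for `k < 0` and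
`e_0 = 1`. The variable `X n` of `SymF` is `e_{n+1}`. -/
noncomputable def eZ : ℤ → SymF := fun k =>
  if k < 0 then 0 else if k = 0 then 1 else MvPolynomial.X (k.toNat - 1)

/-- The Schur function `s_ν`, defined via the dual Jacobi–Trudi determinant
`s_ν = det(e_{ν†_i - i + j})`. -/
noncomputable def schur (ν : YPartition) : SymF :=
  Matrix.det (Matrix.of fun i j : Fin (ν.parts 0) =>
    eZ ((ν.transpose.parts i : ℤ) - (i : ℤ) + (j : ℤ)))


/-- The field of rational functions in `x_0, …, x_{n-1}`, where characters of the
classical groups of rank `n` live. -/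
noncomputable abbrev KK (n : ℕ) := FractionRing (MvPolynomial (Fin n) ℤ)

/-- The variable `x_j` as an element of `KK n`. -/
noncomputable def xv {n : ℕ} (j : Fin n) : KK n :=
  algebraMap (MvPolynomial (Fin n) ℤ) (KK n) (MvPolynomial.X j)

/-- The character of the irreducible representation `V_λ` of `Sp(2n)` (for `ℓ(λ) ≤ n`),
given by the Weyl character formula:
`χ_λ = det(x_j^{λ_i+n-i+1} − x_j^{−(λ_i+n−i+1)}) / det(x_j^{n−i+1} − x_j^{−(n−i+1)})`
(1-indexed; below 0-indexed). -/
noncomputable def charSp (n : ℕ) (lam : YPartition) : KK n :=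
  Matrix.det (Matrix.of fun i j : Fin n =>
    xv j ^ ((lam.parts i : ℤ) + n - i) - xv j ^ (-((lam.parts i : ℤ) + n - i))) /
  Matrix.det (Matrix.of fun i j : Fin n =>
    xv j ^ ((n : ℤ) - i) - xv j ^ (-((n : ℤ) - i)))

/-- The character of the irreducible representation `V_λ` of `O(2n+1)` (for `ℓ(λ) ≤ n`),
restricted to a maximal torus of `SO(2n+1)`, given by the Weyl character formula:
`χ_λ = det(x_j^{λ_i+n-i+1} − x_j^{−(λ_i+n−i)}) / det(x_j^{n−i+1} − x_j^{−(n−i)})`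
(1-indexed; below 0-indexed). -/
noncomputable def charO (n : ℕ) (lam : YPartition) : KK n :=
  Matrix.det (Matrix.of fun i j : Fin n =>
    xv j ^ ((lam.parts i : ℤ) + n - i) - xv j ^ (-((lam.parts i : ℤ) + n - 1 - i))) /
  Matrix.det (Matrix.of fun i j : Fin n =>
    xv j ^ ((n : ℤ) - i) - xv j ^ (-((n : ℤ) - 1 - i)))

/-- The `2n` torus coordinates `x_1, …, x_n, x_1^{-1}, …, x_n^{-1}` of `Sp(2n)`. -/
noncomputable def valsSp (n : ℕ) : Fin n ⊕ Fin n → KK n :=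
  Sum.elim xv fun j => (xv j)⁻¹

/-- The elementary symmetric function `e_k` evaluated at `x_1, …, x_n, x_1^{-1}, …, x_n^{-1}`;
this is the character of `⋀^k` of the vector representation of `Sp(2n)` (or `SO(2n)`). -/
noncomputable def eSp (n k : ℕ) : KK n :=
  ∑ S ∈ Finset.powersetCard k (Finset.univ : Finset (Fin n ⊕ Fin n)),
    ∏ a ∈ S, valsSp n a

/-- The `2n+1` torus coordinates `x_1, …, x_n, x_1^{-1}, …, x_n^{-1}, 1` of `SO(2n+1)`. -/
noncomputable def valsO (n : ℕ) : Option (Fin n ⊕ Fin n) → KK n :=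
  fun o => o.elim 1 (valsSp n)

/-- The elementary symmetric function `e_k` evaluated at
`x_1, …, x_n, x_1^{-1}, …, x_n^{-1}, 1`. -/
noncomputable def eO (n k : ℕ) : KK n :=
  ∑ S ∈ Finset.powersetCard k (Finset.univ : Finset (Option (Fin n ⊕ Fin n))),
    ∏ a ∈ S, valsO n a

/-- Specialization of a symmetric function to the torus coordinates of `Sp(2n)`
(sending `e_k ↦ e_k(x, x^{-1})`). -/
noncomputable def specSp (n : ℕ) : SymF →ₐ[ℤ] KK n :=
  MvPolynomial.aeval fun k => eSp n (k + 1)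

/-- Specialization of a symmetric function to the torus coordinates of `SO(2n+1)`
(sending `e_k ↦ e_k(x, x^{-1}, 1)`). -/
noncomputable def specO (n : ℕ) : SymF →ₐ[ℤ] KK n :=
  MvPolynomial.aeval fun k => eO n (k + 1)

/-- The stable orthogonal character `s^O_{[λ]}`, defined (following Koike–Terada and
Littlewood) by the change of basis `s^O_{[λ]} = Σ_{μ ∈ Q_1} (−1)^{|μ|/2} Σ_ν c^λ_{μ,ν} s_ν`
from Schur functions, where `c` is the Littlewood–Richardson coefficient. -/
noncomputable def sO (c : YPartition → YPartition → YPartition → ℕ) (lam : YPartition) :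
    SymF :=
  ∑ᶠ (μ : YPartition) (_ : YPartition.Qpos μ),
    ∑ᶠ ν : YPartition, ((-1 : ℤ) ^ (μ.size / 2) * (c lam μ ν : ℤ)) • schur ν

/-- The stable symplectic character `s^Sp_{[λ]}`, defined by the change of basis
`s^Sp_{[λ]} = Σ_{μ ∈ Q_{-1}} (−1)^{|μ|/2} Σ_ν c^λ_{μ,ν} s_ν` from Schur functions. -/
noncomputable def sSp (c : YPartition → YPartition → YPartition → ℕ) (lam : YPartition) :
    SymF :=
  ∑ᶠ (μ : YPartition) (_ : YPartition.Qneg μ),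
    ∑ᶠ ν : YPartition, ((-1 : ℤ) ^ (μ.size / 2) * (c lam μ ν : ℤ)) • schur ν


section Aux

open YPartition Finset

namespace KT

/-- A finite downward-closed subset of `ℕ` is an initial segment. -/
lemma mem_iff_lt_ncard {S : Set ℕ} (hfin : S.Finite)
    (hdc : ∀ a b : ℕ, a ≤ b → b ∈ S → a ∈ S) (k : ℕ) :
    k ∈ S ↔ k < S.ncard := by
  constructor
  · intro hk
    have hsub : (Set.Iic k) ⊆ S := fun j hj => hdc j k hj hk
    have h1 : (Set.Iic k).ncard ≤ S.ncard := Set.ncard_le_ncard hsub hfin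
    have h2 : (Set.Iic k).ncard = k + 1 := by
      rw [← Finset.coe_Iic, Set.ncard_coe_finset, Nat.card_Iic]
    omega
  · intro hk
    by_contra hkS
    have hsub : S ⊆ Set.Iio k := by
      intro b hb
      simp only [Set.mem_Iio]
      by_contra hbk
      exact hkS (hdc k b (by omega) hb)
    have h1 : S.ncard ≤ (Set.Iio k).ncard := Set.ncard_le_ncard hsub (Set.finite_Iio k)
    have h2 : (Set.Iio k).ncard = k := by
      rw [← Finset.coe_range, Set.ncard_coe_finset, Finset.card_range]
    omega

lemma finite_setOf_lt_parts (μ : YPartition) (i : ℕ) : {j | i < μ.parts j}.Finite := by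
  obtain ⟨N, hN⟩ := μ.2.2
  apply Set.Finite.subset (Set.finite_Iio N)
  intro j hj
  by_contra hjN
  simp only [Set.mem_Iio, not_lt] at hjN
  have h0 : μ.parts j = 0 := hN j hjN
  simp only [Set.mem_setOf_eq, h0] at hj
  omega

lemma lt_transpose_iff (μ : YPartition) (i k : ℕ) :
    k < μ.transpose.parts i ↔ i < μ.parts k := by
  have hdc : ∀ a b : ℕ, a ≤ b → b ∈ {j | i < μ.parts j} → a ∈ {j | i < μ.parts j} :=
    fun a b hab hb => lt_of_lt_of_le hb (μ.parts_antitone hab)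
  have h := (mem_iff_lt_ncard (finite_setOf_lt_parts μ i) hdc k).symm
  exact h.trans (by rfl)

lemma transpose_transpose (μ : YPartition) : μ.transpose.transpose = μ := by
  ext n
  have h : ∀ k, k < μ.transpose.transpose.parts n ↔ k < μ.parts n := by
    intro k
    rw [lt_transpose_iff, lt_transpose_iff]
  by_contra hne
  rcases Nat.lt_or_ge (μ.transpose.transpose.parts n) (μ.parts n) with hlt | hge
  · exact lt_irrefl _ ((h _).mpr hlt)
  · have hlt : μ.parts n < μ.transpose.transpose.parts n := lt_of_le_of_ne hge (Ne.symm hne)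
    exact lt_irrefl _ ((h _).mp hlt)

lemma transpose_injective : Function.Injective YPartition.transpose := by
  intro μ ν h
  have := congrArg YPartition.transpose h
  rwa [transpose_transpose, transpose_transpose] at this

/-- transpose as an equiv -/
noncomputable def transposeEquiv : YPartition ≃ YPartition :=
  Function.Involutive.toPerm YPartition.transpose transpose_transpose

lemma support_parts_finite (μ : YPartition) : (Function.support μ.parts).Finite := by
  obtain ⟨N, hN⟩ := μ.2.2
  apply Set.Finite.subset (Set.finite_Iio N)
  intro j hj
  by_contra hjN
  simp only [Set.mem_Iio, not_lt] at hjN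
  exact hj (hN j hjN)

lemma size_eq_sum (μ : YPartition) {N : ℕ} (hN : ∀ n, N ≤ n → μ.parts n = 0) :
    μ.size = ∑ n ∈ Finset.range N, μ.parts n := by
  apply finsum_eq_sum_of_support_subset
  intro j hj
  simp only [Finset.coe_range, Set.mem_Iio]
  by_contra hjN
  exact hj (hN j (by omega))

lemma parts_le_size (μ : YPartition) (k : ℕ) : μ.parts k ≤ μ.size := by
  obtain ⟨N, hN⟩ := μ.2.2
  rcases Nat.lt_or_ge k N with hk | hk
  · rw [size_eq_sum μ hN]
    exact Finset.single_le_sum (fun i _ => Nat.zero_le _) (Finset.mem_range.2 hk)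
  · have h0 : μ.parts k = 0 := hN k hk
    rw [h0]; exact Nat.zero_le _

lemma parts_eq_zero_of_size_le (μ : YPartition) {n : ℕ} (h : μ.size ≤ n) :
    μ.parts n = 0 := by
  by_contra h0
  obtain ⟨N, hN⟩ := μ.2.2
  have hM : ∀ m, max N (n+1) ≤ m → μ.parts m = 0 := fun m hm => hN m (le_trans (le_max_left _ _) hm)
  have hsz := size_eq_sum μ hM
  have hsub : Finset.range (n+1) ⊆ Finset.range (max N (n+1)) :=
    Finset.range_subset_range.2 (le_max_right _ _)
  have h1 : ∑ i ∈ Finset.range (n+1), μ.parts i ≤ μ.size := by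
    rw [hsz]; exact Finset.sum_le_sum_of_subset hsub
  have h2 : ∀ i ∈ Finset.range (n+1), 1 ≤ μ.parts i := by
    intro i hi
    simp only [Finset.mem_range] at hi
    have := μ.parts_antitone (show i ≤ n by omega)
    omega
  have h3 : (n+1) ≤ ∑ i ∈ Finset.range (n+1), μ.parts i := by
    calc (n+1) = ∑ _i ∈ Finset.range (n+1), 1 := by simp
    _ ≤ _ := Finset.sum_le_sum h2
  omega

lemma transpose_parts_eq_zero (μ : YPartition) {i : ℕ} (h : μ.parts 0 ≤ i) :
    μ.transpose.parts i = 0 := by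
  by_contra h0
  have : 0 < μ.transpose.parts i := Nat.pos_of_ne_zero h0
  rw [lt_transpose_iff] at this
  omega

lemma transpose_parts_pos (μ : YPartition) {i : ℕ} (h : i < μ.parts 0) :
    1 ≤ μ.transpose.parts i := by
  have : 0 < μ.transpose.parts i := (lt_transpose_iff μ i 0).2 h
  omega

lemma size_transpose (μ : YPartition) : μ.transpose.size = μ.size := by
  obtain ⟨N, hN⟩ := μ.2.2
  set M := max N (μ.parts 0) with hM
  have hNM : ∀ n, M ≤ n → μ.parts n = 0 := fun n hn => hN n (le_trans (le_max_left _ _) hn)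
  have hTM : ∀ n, M ≤ n → μ.transpose.parts n = 0 := fun n hn =>
    transpose_parts_eq_zero μ (le_trans (le_max_right _ _) hn)
  rw [size_eq_sum μ hNM, size_eq_sum μ.transpose hTM]
  have key : ∀ i, i < M → μ.transpose.parts i
      = ((Finset.range M).filter (fun j => i < μ.parts j)).card := by
    intro i _
    have hset : {j | i < μ.parts j} = ↑((Finset.range M).filter (fun j => i < μ.parts j)) := by
      ext j
      simp only [Set.mem_setOf_eq, Finset.coe_filter, Finset.mem_range, Set.mem_setOf_eq]
      constructor
      · intro hj
        refine ⟨?_, hj⟩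
        by_contra hjM
        rw [hNM j (by omega)] at hj; omega
      · exact fun h => h.2
    show Set.ncard {j | i < μ.parts j} = _
    rw [hset, Set.ncard_coe_finset]
  calc ∑ i ∈ Finset.range M, μ.transpose.parts i
      = ∑ i ∈ Finset.range M, ((Finset.range M).filter (fun j => i < μ.parts j)).card := by
        apply Finset.sum_congr rfl
        intro i hi
        exact key i (Finset.mem_range.1 hi)
    _ = ∑ i ∈ Finset.range M, ∑ j ∈ Finset.range M, (if i < μ.parts j then 1 else 0) := by
        apply Finset.sum_congr rfl
        intro i _
        rw [Finset.card_filter]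
    _ = ∑ j ∈ Finset.range M, ∑ i ∈ Finset.range M, (if i < μ.parts j then 1 else 0) :=
        Finset.sum_comm
    _ = ∑ j ∈ Finset.range M, μ.parts j := by
        apply Finset.sum_congr rfl
        intro j hj
        have hle : μ.parts j ≤ M := le_trans (μ.parts_antitone (Nat.zero_le j)) (le_max_right _ _)
        have hfil : (Finset.range M).filter (fun i => i < μ.parts j) = Finset.range (μ.parts j) := by
          ext a
          simp only [Finset.mem_filter, Finset.mem_range]
          omega
        rw [← Finset.card_filter, hfil, Finset.card_range]

lemma finite_size_le (N : ℕ) : {μ : YPartition | μ.size ≤ N}.Finite := by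
  have hinj : Set.InjOn (fun μ : YPartition => (fun i : Fin N => (⟨min (μ.parts i) N, by omega⟩ : Fin (N+1))))
      {μ | μ.size ≤ N} := by
    intro μ hμ ν hν h
    simp only [Set.mem_setOf_eq] at hμ hν
    ext n
    rcases Nat.lt_or_ge n N with hn | hn
    · have h1 := congrFun h ⟨n, hn⟩
      simp only [Fin.mk.injEq] at h1
      have h2 : μ.parts n ≤ N := le_trans (parts_le_size μ n) hμ
      have h3 : ν.parts n ≤ N := le_trans (parts_le_size ν n) hν
      omega
    · rw [parts_eq_zero_of_size_le μ (by omega), parts_eq_zero_of_size_le ν (by omega)]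
  exact Set.Finite.of_finite_image (Set.toFinite _) hinj

/-! ### Part II: coefficients of Schur polynomials -/

open MvPolynomial

noncomputable def dd (lam : YPartition) : ℕ →₀ ℕ :=
  ∑ i ∈ Finset.range (lam.parts 0), Finsupp.single (lam.transpose.parts i - 1) 1

noncomputable def GG (k : ℕ) (d : ℕ →₀ ℕ) : ℕ := d.sum fun t m => m * (t + 1 - k)

lemma GG_zero (k : ℕ) : GG k 0 = 0 := Finsupp.sum_zero_index

lemma GG_add (k : ℕ) (a b : ℕ →₀ ℕ) : GG k (a + b) = GG k a + GG k b :=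
  Finsupp.sum_add_index' (fun t => zero_mul _) (fun t m1 m2 => add_mul m1 m2 _)

lemma GG_sum {ι : Type*} (k : ℕ) (s : Finset ι) (v : ι → (ℕ →₀ ℕ)) :
    GG k (∑ i ∈ s, v i) = ∑ i ∈ s, GG k (v i) := by
  classical
  induction s using Finset.induction_on with
  | empty => simp [GG_zero]
  | insert _ _ hx ih => rw [Finset.sum_insert hx, Finset.sum_insert hx, GG_add, ih]

lemma GG_single (k t m : ℕ) : GG k (Finsupp.single t m) = m * (t + 1 - k) := by
  unfold GG
  rw [Finsupp.sum_single_index]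
  exact zero_mul _

noncomputable def FF (k : ℕ) (lam : YPartition) : ℕ :=
  ∑ i ∈ Finset.range (lam.parts 0), (lam.transpose.parts i - k)

lemma GG_dd (k : ℕ) (lam : YPartition) : GG k (dd lam) = FF k lam := by
  unfold dd FF
  rw [GG_sum]
  apply Finset.sum_congr rfl
  intro i hi
  rw [GG_single]
  have h1 : 1 ≤ lam.transpose.parts i := transpose_parts_pos lam (Finset.mem_range.1 hi)
  omega

lemma FF_zero (lam : YPartition) : FF 0 lam = lam.size := by
  rw [← size_transpose lam,
    size_eq_sum lam.transpose (N := lam.parts 0) (fun n hn => transpose_parts_eq_zero lam hn)]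
  unfold FF
  simp

lemma FF_succ (k : ℕ) (lam : YPartition) : FF k lam = lam.parts k + FF (k+1) lam := by
  unfold FF
  have hterm : ∀ i ∈ Finset.range (lam.parts 0),
      lam.transpose.parts i - k
        = (if k < lam.transpose.parts i then 1 else 0) + (lam.transpose.parts i - (k+1)) := by
    intro i _
    split <;> omega
  rw [Finset.sum_congr rfl hterm, Finset.sum_add_distrib]
  congr 1
  rw [← Finset.card_filter]
  have hfil : (Finset.range (lam.parts 0)).filter (fun i => k < lam.transpose.parts i)
      = Finset.range (lam.parts k) := by
    ext i
    simp only [Finset.mem_filter, Finset.mem_range]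
    rw [lt_transpose_iff]
    constructor
    · exact fun h => h.2
    · exact fun h => ⟨lt_of_lt_of_le h (lam.parts_antitone (Nat.zero_le k)), h⟩
  rw [hfil, Finset.card_range]

lemma FF_ext {μ ν : YPartition} (h : ∀ k, FF k μ = FF k ν) : μ = ν := by
  ext k
  have h1 := FF_succ k μ
  have h2 := FF_succ k ν
  have h3 := h k
  have h4 := h (k+1)
  omega

noncomputable def uu (a : ℤ) : ℕ →₀ ℕ :=
  if a ≤ 0 then 0 else Finsupp.single (a.toNat - 1) 1

lemma eZ_eq_monomial {a : ℤ} (h : 0 ≤ a) : eZ a = MvPolynomial.monomial (uu a) 1 := by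
  unfold eZ uu
  rcases lt_or_eq_of_le h with h1 | h1
  · rw [if_neg (by omega), if_neg (by omega), if_neg (by omega)]
    rfl
  · rw [← h1]
    rw [if_neg (by omega), if_pos rfl, if_pos le_rfl]
    rfl

lemma GG_uu (k : ℕ) {a : ℤ} (h : 0 ≤ a) : GG k (uu a) = a.toNat - k := by
  unfold uu
  split
  next h2 =>
    rw [GG_zero]
    omega
  next h2 =>
    rw [GG_single]
    omega

lemma prod_monomial_one {ι : Type*} (s : Finset ι) (v : ι → (ℕ →₀ ℕ)) :
    ∏ i ∈ s, (MvPolynomial.monomial (v i) (1:ℤ)) = MvPolynomial.monomial (∑ i ∈ s, v i) 1 := by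
  classical
  induction s using Finset.induction_on with
  | empty =>
    simp only [Finset.prod_empty, Finset.sum_empty]
    rfl
  | insert _ _ hx ih =>
    rw [Finset.prod_insert hx, Finset.sum_insert hx, ih, MvPolynomial.monomial_mul, one_mul]

/-- The exponent appearing in the `(σ i, i)` entry of the Jacobi–Trudi matrix. -/
noncomputable def aZ (μ : YPartition) (σ : Equiv.Perm (Fin (μ.parts 0)))
    (i : Fin (μ.parts 0)) : ℤ :=
  (μ.transpose.parts (σ i) : ℤ) - ((σ i) : ℤ) + (i : ℤ)

/-- Row-form exponent. -/
noncomputable def xZ (μ : YPartition) (τ : Equiv.Perm (Fin (μ.parts 0)))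
    (j : Fin (μ.parts 0)) : ℤ :=
  (μ.transpose.parts j : ℤ) - (j : ℤ) + (τ j : ℤ)

lemma sum_aZ_eq (μ : YPartition) (σ : Equiv.Perm (Fin (μ.parts 0))) {α : Type*}
    [AddCommMonoid α] (f : ℤ → α) :
    ∑ i, f (aZ μ σ i) = ∑ j, f (xZ μ σ⁻¹ j) := by
  have h := Equiv.Perm.sum_comp σ Finset.univ (fun j => f (xZ μ σ⁻¹ j)) (by simp)
  rw [← h]
  apply Finset.sum_congr rfl
  intro i _
  congr 1
  unfold aZ xZ
  rw [Equiv.Perm.inv_def, Equiv.symm_apply_apply]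

lemma aZ_nonneg_iff (μ : YPartition) (σ : Equiv.Perm (Fin (μ.parts 0))) :
    (∀ i, 0 ≤ aZ μ σ i) ↔ (∀ j, 0 ≤ xZ μ σ⁻¹ j) := by
  constructor
  · intro h j
    have := h (σ⁻¹ j)
    unfold aZ at this
    unfold xZ
    rw [Equiv.Perm.inv_def] at this ⊢
    rwa [Equiv.apply_symm_apply] at this
  · intro h i
    have := h (σ i)
    unfold xZ at this
    unfold aZ
    rw [Equiv.Perm.inv_def] at this
    rwa [Equiv.symm_apply_apply] at this

lemma schur_term (μ : YPartition) (σ : Equiv.Perm (Fin (μ.parts 0)))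
    (h : ∀ i, 0 ≤ aZ μ σ i) :
    ∏ i, eZ (aZ μ σ i) = MvPolynomial.monomial (∑ i, uu (aZ μ σ i)) 1 := by
  rw [Finset.prod_congr rfl (fun i _ => eZ_eq_monomial (h i)), prod_monomial_one]

lemma schur_term_zero (μ : YPartition) (σ : Equiv.Perm (Fin (μ.parts 0)))
    (h : ¬ ∀ i, 0 ≤ aZ μ σ i) :
    ∏ i, eZ (aZ μ σ i) = 0 := by
  push_neg at h
  obtain ⟨i, hi⟩ := h
  apply Finset.prod_eq_zero (Finset.mem_univ i)
  unfold eZ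
  rw [if_pos hi]

lemma coeff_schur (μ : YPartition) (d : ℕ →₀ ℕ) :
    MvPolynomial.coeff d (schur μ) =
      ∑ σ : Equiv.Perm (Fin (μ.parts 0)),
        (Equiv.Perm.sign σ : ℤ) * MvPolynomial.coeff d (∏ i, eZ (aZ μ σ i)) := by
  unfold schur
  rw [Matrix.det_apply', MvPolynomial.coeff_sum]
  apply Finset.sum_congr rfl
  intro σ _
  rw [show ((Equiv.Perm.sign σ : ℤ) : SymF) * (∏ i, (Matrix.of fun i j : Fin (μ.parts 0) =>
        eZ ((μ.transpose.parts i : ℤ) - (i : ℤ) + (j : ℤ))) (σ i) i)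
      = (Equiv.Perm.sign σ : ℤ) • (∏ i, eZ (aZ μ σ i)) by rw [zsmul_eq_mul]; rfl]
  rw [MvPolynomial.coeff_smul, smul_eq_mul]

lemma coeff_schur_ne_zero {μ : YPartition} {d : ℕ →₀ ℕ}
    (h : MvPolynomial.coeff d (schur μ) ≠ 0) :
    ∃ σ : Equiv.Perm (Fin (μ.parts 0)), (∀ i, 0 ≤ aZ μ σ i) ∧ ∑ i, uu (aZ μ σ i) = d := by
  classical
  by_contra hcon
  push_neg at hcon
  apply h
  rw [coeff_schur]
  apply Finset.sum_eq_zero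
  intro σ _
  by_cases hσ : ∀ i, 0 ≤ aZ μ σ i
  · rw [schur_term μ σ hσ, MvPolynomial.coeff_monomial, if_neg (hcon σ hσ), mul_zero]
  · rw [schur_term_zero μ σ hσ, MvPolynomial.coeff_zero, mul_zero]

lemma GG_sum_uu (μ : YPartition) (σ : Equiv.Perm (Fin (μ.parts 0)))
    (h : ∀ i, 0 ≤ aZ μ σ i) (k : ℕ) :
    GG k (∑ i, uu (aZ μ σ i)) = ∑ i, ((aZ μ σ i).toNat - k) := by
  rw [GG_sum]
  exact Finset.sum_congr rfl fun i _ => GG_uu k (h i)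

lemma sum_toNat_aZ (μ : YPartition) (σ : Equiv.Perm (Fin (μ.parts 0)))
    (h : ∀ i, 0 ≤ aZ μ σ i) :
    ∑ i, (aZ μ σ i).toNat = μ.size := by
  have hZ : ((∑ i, (aZ μ σ i).toNat : ℕ) : ℤ) = ∑ i, aZ μ σ i := by
    rw [Nat.cast_sum]
    exact Finset.sum_congr rfl fun i _ => Int.toNat_of_nonneg (h i)
  have h1 : ∑ i, ((σ i : ℕ) : ℤ) = ∑ i : Fin (μ.parts 0), ((i : ℕ) : ℤ) :=
    Equiv.Perm.sum_comp σ Finset.univ (fun i : Fin (μ.parts 0) => ((i : ℕ) : ℤ)) (by simp)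
  have h2 : ∑ i, (μ.transpose.parts (σ i) : ℤ) = ∑ i : Fin (μ.parts 0), (μ.transpose.parts i : ℤ) :=
    Equiv.Perm.sum_comp σ Finset.univ
      (fun i : Fin (μ.parts 0) => (μ.transpose.parts (i : ℕ) : ℤ)) (by simp)
  have hsum : ∑ i, aZ μ σ i = ∑ i : Fin (μ.parts 0), (μ.transpose.parts i : ℤ) := by
    unfold aZ
    rw [Finset.sum_add_distrib, Finset.sum_sub_distrib, h1, h2]
    ring
  have hsz : (μ.size : ℤ) = ∑ i : Fin (μ.parts 0), (μ.transpose.parts i : ℤ) := by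
    have h0 : μ.size = ∑ i ∈ Finset.range (μ.parts 0), μ.transpose.parts i := by
      have hf := FF_zero μ
      unfold FF at hf
      simp only [Nat.sub_zero] at hf
      exact hf.symm
    rw [h0, Nat.cast_sum]
    exact (Fin.sum_univ_eq_sum_range (fun i => (μ.transpose.parts i : ℤ)) (μ.parts 0)).symm
  have hfin : ((∑ i, (aZ μ σ i).toNat : ℕ) : ℤ) = (μ.size : ℤ) := by rw [hZ, hsum, hsz]
  exact_mod_cast hfin

lemma sum_range_card_le (T : Finset ℕ) : ∑ x ∈ Finset.range T.card, x ≤ ∑ x ∈ T, x := by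
  suffices H : ∀ t (T : Finset ℕ), T.card = t → ∑ x ∈ Finset.range t, x ≤ ∑ x ∈ T, x from
    H T.card T rfl
  intro t
  induction t with
  | zero => intro T _; simp
  | succ t ih =>
    intro T hn
    have hne : T.Nonempty := by rw [← Finset.card_pos, hn]; omega
    set M := T.max' hne with hM
    have hMem : M ∈ T := T.max'_mem hne
    have hsub : T ⊆ Finset.range (M+1) := by
      intro x hx
      have := Finset.le_max' T x hx
      rw [Finset.mem_range]; omega
    have hcard : t + 1 ≤ M + 1 := by
      rw [← hn]
      calc T.card ≤ (Finset.range (M+1)).card := Finset.card_le_card hsub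
      _ = M + 1 := Finset.card_range _
    have herase : (T.erase M).card = t := by
      rw [Finset.card_erase_of_mem hMem]
      omega
    have ihe := ih (T.erase M) herase
    have hsum : ∑ x ∈ T, x = M + ∑ x ∈ T.erase M, x := (Finset.add_sum_erase T id hMem).symm
    rw [Finset.sum_range_succ, hsum]
    omega

lemma key_ineq (μ : YPartition) (τ : Equiv.Perm (Fin (μ.parts 0)))
    (hx : ∀ j, 0 ≤ xZ μ τ j) (k : ℕ) :
    FF k μ ≤ ∑ j, ((xZ μ τ j).toNat - k) := by
  classical
  set s : Finset (Fin (μ.parts 0)) := Finset.univ.filter (fun j => (j : ℕ) < μ.parts k) with hs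
  have hmem : ∀ j : Fin (μ.parts 0), j ∈ s ↔ (j:ℕ) < μ.parts k := by
    intro j; simp [hs]
  have hmem' : ∀ j : Fin (μ.parts 0), j ∈ s ↔ k < μ.transpose.parts j := by
    intro j; rw [hmem, ← lt_transpose_iff]
  have hL : FF k μ = ∑ j ∈ s, (μ.transpose.parts j - k) := by
    unfold FF
    rw [← Fin.sum_univ_eq_sum_range (fun i => μ.transpose.parts i - k) (μ.parts 0)]
    symm
    apply Finset.sum_subset (Finset.subset_univ s)
    intro j _ hj
    rw [hmem'] at hj
    omega
  have hR : ∑ j ∈ s, ((xZ μ τ j).toNat - k) ≤ ∑ j, ((xZ μ τ j).toNat - k) :=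
    Finset.sum_le_sum_of_subset (Finset.subset_univ s)
  have hinj1 : ∀ a ∈ s, ∀ b ∈ s, (a : ℕ) = (b : ℕ) → a = b :=
    fun a _ b _ h => Fin.val_injective h
  have hinj2 : ∀ a ∈ s, ∀ b ∈ s, ((τ a : ℕ)) = ((τ b : ℕ)) → a = b :=
    fun a _ b _ h => τ.injective (Fin.val_injective h)
  have hτ : ∑ j ∈ s, (j:ℕ) ≤ ∑ j ∈ s, ((τ j : ℕ)) := by
    have him : s.image (fun j : Fin (μ.parts 0) => (j : ℕ))
        = Finset.range (min (μ.parts k) (μ.parts 0)) := by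
      ext a
      simp only [Finset.mem_image, Finset.mem_range, lt_min_iff]
      constructor
      · rintro ⟨j, hj, rfl⟩
        exact ⟨(hmem j).1 hj, j.isLt⟩
      · rintro ⟨h1, h2⟩
        exact ⟨⟨a, h2⟩, (hmem _).2 h1, rfl⟩
    have hcard : s.card = min (μ.parts k) (μ.parts 0) := by
      rw [← Finset.card_image_of_injOn (fun a ha b hb h => hinj1 a ha b hb h), him,
        Finset.card_range]
    have h1 : ∑ x ∈ Finset.range s.card, x = ∑ j ∈ s, (j:ℕ) := by
      rw [hcard, ← him]
      exact Finset.sum_image hinj1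
    set T := s.image (fun j : Fin (μ.parts 0) => ((τ j : ℕ))) with hT
    have h2 : ∑ x ∈ T, x = ∑ j ∈ s, ((τ j : ℕ)) := Finset.sum_image hinj2
    have h3 : T.card = s.card := Finset.card_image_of_injOn (fun a ha b hb h => hinj2 a ha b hb h)
    have h4 := sum_range_card_le T
    rw [h3] at h4
    omega
  rw [hL]
  refine le_trans ?_ hR
  have hcast : ((∑ j ∈ s, (μ.transpose.parts j - k) : ℕ) : ℤ)
      ≤ ((∑ j ∈ s, ((xZ μ τ j).toNat - k) : ℕ) : ℤ) := by
    rw [Nat.cast_sum, Nat.cast_sum]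
    have e1 : ∀ j ∈ s, ((μ.transpose.parts j - k : ℕ) : ℤ) = (μ.transpose.parts j : ℤ) - k := by
      intro j hj
      rw [hmem'] at hj
      omega
    have e2 : ∀ j ∈ s, (xZ μ τ j) - k ≤ (((xZ μ τ j).toNat - k : ℕ) : ℤ) := by
      intro j _
      have := hx j
      omega
    have e3 : ∑ j ∈ s, (xZ μ τ j - k) = ∑ j ∈ s, ((μ.transpose.parts j : ℤ) - k)
        + ∑ j ∈ s, (((τ j : ℕ) : ℤ) - ((j : ℕ) : ℤ)) := by
      rw [← Finset.sum_add_distrib]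
      apply Finset.sum_congr rfl
      intro j _
      unfold xZ
      push_cast
      ring
    have e4 : 0 ≤ ∑ j ∈ s, (((τ j : ℕ) : ℤ) - ((j : ℕ) : ℤ)) := by
      rw [Finset.sum_sub_distrib]
      have hc : ((∑ j ∈ s, ((j:ℕ)) : ℕ) : ℤ) ≤ ((∑ j ∈ s, ((τ j : ℕ)) : ℕ) : ℤ) := by
        exact_mod_cast hτ
      rw [Nat.cast_sum, Nat.cast_sum] at hc
      omega
    calc ∑ j ∈ s, ((μ.transpose.parts j - k : ℕ) : ℤ)
        = ∑ j ∈ s, ((μ.transpose.parts j : ℤ) - k) := Finset.sum_congr rfl e1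
      _ ≤ ∑ j ∈ s, (xZ μ τ j - k) := by rw [e3]; omega
      _ ≤ ∑ j ∈ s, (((xZ μ τ j).toNat - k : ℕ) : ℤ) := Finset.sum_le_sum e2
  exact_mod_cast hcast

lemma xZ_of_coeff {μ : YPartition} {σ : Equiv.Perm (Fin (μ.parts 0))} {d : ℕ →₀ ℕ}
    (hσ0 : ∀ i, 0 ≤ aZ μ σ i) (hσd : ∑ i, uu (aZ μ σ i) = d) (k : ℕ) :
    GG k d = ∑ j, ((xZ μ σ⁻¹ j).toNat - k) := by
  rw [← hσd, GG_sum_uu μ σ hσ0 k, sum_aZ_eq μ σ (fun a => a.toNat - k)]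

lemma perm_eq_one_of_sum_uu {μ : YPartition} {σ : Equiv.Perm (Fin (μ.parts 0))}
    (hσ0 : ∀ i, 0 ≤ aZ μ σ i) (hσd : ∑ i, uu (aZ μ σ i) = dd μ) : σ = 1 := by
  classical
  have hx0 : ∀ j, 0 ≤ xZ μ σ⁻¹ j := (aZ_nonneg_iff μ σ).1 hσ0
  have hGG : ∀ k, FF k μ = ∑ j, ((xZ μ σ⁻¹ j).toNat - k) := by
    intro k
    rw [← GG_dd k μ, xZ_of_coeff hσ0 hσd k]
  by_contra hne
  have hτne : σ⁻¹ ≠ 1 := by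
    intro h
    exact hne (by rw [← inv_inv σ, h, inv_one])
  have hex : ∃ j, σ⁻¹ j ≠ j := by
    by_contra hall
    push_neg at hall
    exact hτne (Equiv.ext hall)
  set S : Finset (Fin (μ.parts 0)) := Finset.univ.filter (fun j => σ⁻¹ j ≠ j) with hS
  have hSne : S.Nonempty := by
    obtain ⟨j, hj⟩ := hex
    exact ⟨j, by simpa [hS] using hj⟩
  set i0 := S.min' hSne with hi0def
  have hi0S : i0 ∈ S := S.min'_mem hSne
  have hi0 : σ⁻¹ i0 ≠ i0 := by
    have h := hi0S
    simp only [hS, Finset.mem_filter, Finset.mem_univ, true_and] at h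
    exact h
  have hlow : ∀ j, j < i0 → σ⁻¹ j = j := by
    intro j hj
    by_contra hjj
    have : i0 ≤ j := S.min'_le j (by simpa [hS] using hjj)
    exact absurd hj (not_lt.2 this)
  have hgt : (i0 : ℕ) < ((σ⁻¹ i0 : Fin (μ.parts 0)) : ℕ) := by
    rcases lt_trichotomy (σ⁻¹ i0) i0 with h | h | h
    · have hfix := hlow (σ⁻¹ i0) h
      exact absurd ((Equiv.injective σ⁻¹) hfix) hi0
    · exact absurd h hi0
    · exact h
  set k := μ.transpose.parts i0 with hk
  set s' : Finset (Fin (μ.parts 0)) := Finset.univ.filter (fun j => j < i0) with hs'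
  have hnotmem : i0 ∉ s' := by simp [hs']
  have hRHS : ∑ j ∈ insert i0 s', ((xZ μ σ⁻¹ j).toNat - k) ≤ ∑ j, ((xZ μ σ⁻¹ j).toNat - k) :=
    Finset.sum_le_sum_of_subset (Finset.subset_univ _)
  have hterm : k + 1 ≤ (xZ μ σ⁻¹ i0).toNat := by
    have h1 : xZ μ σ⁻¹ i0 = (k : ℤ) - ((i0 : ℕ) : ℤ) + (((σ⁻¹ i0 : Fin (μ.parts 0)) : ℕ) : ℤ) := by
      unfold xZ
      rw [← hk]
    omega
  have heq : ∀ j ∈ s', ((xZ μ σ⁻¹ j).toNat - k) = (μ.transpose.parts j - k) := by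
    intro j hj
    have hjlt : j < i0 := by simpa [hs'] using hj
    have hτj : σ⁻¹ j = j := hlow j hjlt
    have hxval : xZ μ σ⁻¹ j = (μ.transpose.parts j : ℤ) := by
      unfold xZ
      rw [hτj]
      ring
    rw [hxval]
    simp
  have hFF : FF k μ = ∑ j ∈ s', (μ.transpose.parts j - k) := by
    unfold FF
    rw [← Fin.sum_univ_eq_sum_range (fun i => μ.transpose.parts i - k) (μ.parts 0)]
    symm
    apply Finset.sum_subset (Finset.subset_univ s')
    intro j _ hj
    have hge : (i0 : ℕ) ≤ (j : ℕ) := by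
      simp only [hs', Finset.mem_filter, Finset.mem_univ, true_and, not_lt] at hj
      exact hj
    have hle := μ.transpose.parts_antitone hge
    omega
  have hcontr := hGG k
  rw [Finset.sum_insert hnotmem, Finset.sum_congr rfl heq] at hRHS
  rw [hFF] at hcontr
  omega

lemma coeff_dd_schur_self (μ : YPartition) : MvPolynomial.coeff (dd μ) (schur μ) = 1 := by
  classical
  rw [coeff_schur]
  have hid0 : ∀ i, 0 ≤ aZ μ 1 i := by
    intro i
    unfold aZ
    simp only [Equiv.Perm.coe_one, id_eq]
    omega
  have hidd : ∑ i, uu (aZ μ 1 i) = dd μ := by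
    have hterm : ∀ i : Fin (μ.parts 0),
        uu (aZ μ 1 i) = Finsupp.single (μ.transpose.parts i - 1) 1 := by
      intro i
      have hval : aZ μ 1 i = (μ.transpose.parts i : ℤ) := by
        unfold aZ
        simp only [Equiv.Perm.coe_one, id_eq]
        ring
      rw [hval]
      unfold uu
      have hpos := transpose_parts_pos μ i.isLt
      rw [if_neg (show ¬ ((μ.transpose.parts i : ℤ) ≤ 0) by omega)]
      simp
    rw [Finset.sum_congr rfl (fun i _ => hterm i)]
    exact Fin.sum_univ_eq_sum_range (fun i => Finsupp.single (μ.transpose.parts i - 1) 1) (μ.parts 0)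
  rw [Finset.sum_eq_single (1 : Equiv.Perm (Fin (μ.parts 0)))]
  · rw [schur_term μ 1 hid0, MvPolynomial.coeff_monomial, if_pos hidd]
    simp
  · intro σ _ hσ
    by_cases hall : ∀ i, 0 ≤ aZ μ σ i
    · rw [schur_term μ σ hall, MvPolynomial.coeff_monomial, if_neg, mul_zero]
      intro heq
      exact hσ (perm_eq_one_of_sum_uu hall heq)
    · rw [schur_term_zero μ σ hall, MvPolynomial.coeff_zero, mul_zero]
  · intro h
    exact absurd (Finset.mem_univ _) h

lemma schur_ne_zero (μ : YPartition) : schur μ ≠ 0 := by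
  intro h
  have h1 := coeff_dd_schur_self μ
  rw [h] at h1
  simp at h1

lemma coeff_dd_le {lam μ : YPartition} (h : MvPolynomial.coeff (dd lam) (schur μ) ≠ 0) :
    (∀ k, FF k μ ≤ FF k lam) ∧ μ.size = lam.size := by
  obtain ⟨σ, hσ0, hσd⟩ := coeff_schur_ne_zero h
  have hx0 : ∀ j, 0 ≤ xZ μ σ⁻¹ j := (aZ_nonneg_iff μ σ).1 hσ0
  have hGG : ∀ k, FF k lam = ∑ j, ((xZ μ σ⁻¹ j).toNat - k) := fun k =>
    (GG_dd k lam).symm.trans (xZ_of_coeff hσ0 hσd k)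
  constructor
  · intro k
    rw [hGG k]
    exact key_ineq μ σ⁻¹ hx0 k
  · have h1 : FF 0 lam = ∑ i, ((aZ μ σ i).toNat - 0) := by
      rw [← GG_dd 0 lam, ← hσd, GG_sum_uu μ σ hσ0 0]
    have h2 : ∑ i, ((aZ μ σ i).toNat - 0) = ∑ i, (aZ μ σ i).toNat :=
      Finset.sum_congr rfl (fun i _ => by omega)
    have h3 := sum_toNat_aZ μ σ hσ0
    have h4 := FF_zero lam
    have h5 := FF_zero μ
    omega

/-- The coefficient of `e^{λ₀†}` in a finite linear combination of Schur polynomials,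
when `λ₀` is minimal. -/
lemma coeff_finsum_eq_single {f : YPartition → ℤ} (hf : (Function.support f).Finite)
    (lam0 : YPartition)
    (hmin : ∀ l, f l ≠ 0 → (∀ k, FF k l ≤ FF k lam0) → l.size = lam0.size → l = lam0) :
    MvPolynomial.coeff (dd lam0) (∑ᶠ l, f l • schur l) = f lam0 := by
  classical
  set coeffHom : SymF →+ ℤ :=
    { toFun := MvPolynomial.coeff (dd lam0)
      map_zero' := MvPolynomial.coeff_zero _
      map_add' := fun p q => MvPolynomial.coeff_add _ p q } with hcoeffHom
  have hsupp : (Function.support fun l => f l • schur l).Finite := by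
    apply hf.subset
    intro l hl
    simp only [Function.mem_support] at hl ⊢
    intro h0
    apply hl
    rw [h0, zero_smul]
  have hmap := AddMonoidHom.map_finsum coeffHom hsupp
  have hstep : MvPolynomial.coeff (dd lam0) (∑ᶠ l, f l • schur l)
      = ∑ᶠ l, f l * MvPolynomial.coeff (dd lam0) (schur l) := by
    rw [show MvPolynomial.coeff (dd lam0) (∑ᶠ l, f l • schur l)
        = coeffHom (∑ᶠ l, f l • schur l) from rfl, hmap]
    apply finsum_congr
    intro l
    show MvPolynomial.coeff (dd lam0) (f l • schur l) = _
    rw [MvPolynomial.coeff_smul, smul_eq_mul]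
  rw [hstep]
  have hsupp2 : (Function.support fun l => f l * MvPolynomial.coeff (dd lam0) (schur l))
      ⊆ ↑hf.toFinset := by
    intro l hl
    simp only [Function.mem_support] at hl
    simp only [Finset.coe_sort_coe, Set.Finite.coe_toFinset, Function.mem_support]
    intro h0
    apply hl
    rw [h0, zero_mul]
  rw [finsum_eq_sum_of_support_subset _ hsupp2]
  rcases eq_or_ne (f lam0) 0 with h0 | h0
  · rw [h0]
    apply Finset.sum_eq_zero
    intro l hl
    by_cases hco : MvPolynomial.coeff (dd lam0) (schur l) = 0
    · rw [hco, mul_zero]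
    · have hle := coeff_dd_le hco
      have hfl : f l ≠ 0 := by simpa using hl
      have : l = lam0 := hmin l hfl hle.1 hle.2
      rw [this, h0, zero_mul]
  · rw [Finset.sum_eq_single lam0]
    · rw [coeff_dd_schur_self, mul_one]
    · intro l hl hlne
      by_cases hco : MvPolynomial.coeff (dd lam0) (schur l) = 0
      · rw [hco, mul_zero]
      · have hle := coeff_dd_le hco
        have hfl : f l ≠ 0 := by simpa using hl
        exact absurd (hmin l hfl hle.1 hle.2) hlne
    · intro hnot
      exact absurd (hf.mem_toFinset.2 h0) hnot

lemma schur_indep {f : YPartition → ℤ} (hf : (Function.support f).Finite)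
    (h : ∑ᶠ l, f l • schur l = 0) : ∀ l, f l = 0 := by
  by_contra hcon
  push_neg at hcon
  obtain ⟨lam1, hlam1⟩ := hcon
  have hne : (Function.support f).Nonempty := ⟨lam1, hlam1⟩
  obtain ⟨lam0, hlam0, hminim⟩ :=
    Set.Finite.exists_minimalFor (fun l => (fun k => FF k l)) _ hf hne
  have hmin : ∀ l, f l ≠ 0 → (∀ k, FF k l ≤ FF k lam0) → l.size = lam0.size → l = lam0 := by
    intro l hfl hle _
    have hle' : (fun k => FF k l) ≤ (fun k => FF k lam0) := hle
    have := hminim hfl hle'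
    exact FF_ext (fun k => le_antisymm (hle k) (this k))
  have hco := coeff_finsum_eq_single hf lam0 hmin
  rw [h, MvPolynomial.coeff_zero] at hco
  exact hlam0 hco.symm

lemma schur_expansion_unique {f g : YPartition → ℤ}
    (hf : (Function.support f).Finite) (hg : (Function.support g).Finite)
    (h : ∑ᶠ l, f l • schur l = ∑ᶠ l, g l • schur l) : ∀ l, f l = g l := by
  have hf' : (Function.support fun l => f l • schur l).Finite := by
    apply hf.subset
    intro l hl
    simp only [Function.mem_support] at hl ⊢
    intro h0
    exact hl (by rw [h0, zero_smul])
  have hg' : (Function.support fun l => g l • schur l).Finite := by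
    apply hg.subset
    intro l hl
    simp only [Function.mem_support] at hl ⊢
    intro h0
    exact hl (by rw [h0, zero_smul])
  have hzero : ∑ᶠ l, (f l - g l) • schur l = 0 := by
    have : ∀ l, (f l - g l) • schur l = f l • schur l - g l • schur l :=
      fun l => sub_smul _ _ _
    rw [finsum_congr this, finsum_sub_distrib hf' hg', h, sub_self]
  have hfg : (Function.support fun l => f l - g l).Finite := by
    apply (hf.union hg).subset
    intro l hl
    simp only [Function.mem_support] at hl
    by_contra hnot
    simp only [Set.mem_union, Function.mem_support, not_or, not_not] at hnot
    rw [hnot.1, hnot.2] at hl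
    exact hl (sub_self _)
  have := schur_indep hfg hzero
  intro l
  have hl := this l
  omega

/-- Schur polynomials are weighted homogeneous. -/
lemma schur_homog (μ : YPartition) :
    (schur μ).IsWeightedHomogeneous (fun n => n + 1) μ.size := by
  classical
  unfold schur
  rw [Matrix.det_apply']
  apply MvPolynomial.IsWeightedHomogeneous.sum
  intro σ _
  have hrw : ((Equiv.Perm.sign σ : ℤ) : SymF) * (∏ i, (Matrix.of fun i j : Fin (μ.parts 0) =>
        eZ ((μ.transpose.parts i : ℤ) - (i : ℤ) + (j : ℤ))) (σ i) i)
      = MvPolynomial.C ((Equiv.Perm.sign σ : ℤ)) * (∏ i, eZ (aZ μ σ i)) := by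
    rw [(eq_intCast (MvPolynomial.C : ℤ →+* SymF) _).symm]
    rfl
  rw [hrw]
  have hC : (MvPolynomial.C ((Equiv.Perm.sign σ : ℤ)) : SymF).IsWeightedHomogeneous
      (fun n => n + 1) 0 := MvPolynomial.isWeightedHomogeneous_C _ _
  rw [show μ.size = 0 + μ.size from (zero_add _).symm]
  apply hC.mul
  by_cases hall : ∀ i, 0 ≤ aZ μ σ i
  · rw [schur_term μ σ hall]
    apply MvPolynomial.isWeightedHomogeneous_monomial
    have hw : (Finsupp.weight (fun n => n + 1) (∑ i, uu (aZ μ σ i)) : ℕ)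
        = GG 0 (∑ i, uu (aZ μ σ i)) := by
      rw [Finsupp.weight_apply]
      unfold GG
      apply Finsupp.sum_congr
      intro t _
      simp [smul_eq_mul]
    rw [hw, GG_sum_uu μ σ hall 0]
    have h2 : ∑ i, ((aZ μ σ i).toNat - 0) = ∑ i, (aZ μ σ i).toNat :=
      Finset.sum_congr rfl (fun i _ => by omega)
    rw [h2, sum_toNat_aZ μ σ hall]
  · rw [schur_term_zero μ σ hall]
    exact MvPolynomial.isWeightedHomogeneous_zero (R := ℤ) (fun n => n + 1) μ.size

lemma weight_dd (lam : YPartition) :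
    (Finsupp.weight (fun n => n + 1) (dd lam) : ℕ) = lam.size := by
  have hw : (Finsupp.weight (fun n => n + 1) (dd lam) : ℕ) = GG 0 (dd lam) := by
    rw [Finsupp.weight_apply]
    unfold GG
    apply Finsupp.sum_congr
    intro t _
    simp [smul_eq_mul]
  rw [hw, GG_dd, FF_zero]

/-! ### Part III: properties of the coefficients `c` -/

section CProps

variable (c : YPartition → YPartition → YPartition → ℕ)
variable (hc : ∀ μ ν : YPartition,
      schur μ * schur ν = ∑ᶠ lam : YPartition, (c lam μ ν : SymF) * schur lam)

include hc

lemma hc_smul (μ ν : YPartition) :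
    schur μ * schur ν = ∑ᶠ lam, ((c lam μ ν : ℤ)) • schur lam := by
  rw [hc μ ν]
  apply finsum_congr
  intro lam
  rw [zsmul_eq_mul]
  norm_num

lemma c_support_finite (μ ν : YPartition) : {lam | c lam μ ν ≠ 0}.Finite := by
  by_contra hinf
  have hsupport : Function.support (fun lam => (c lam μ ν : ℤ) • schur lam)
      = {lam | c lam μ ν ≠ 0} := by
    ext lam
    simp only [Function.mem_support, Set.mem_setOf_eq]
    constructor
    · intro h h0
      apply h
      rw [h0]
      simp
    · intro h h0
      rcases smul_eq_zero.1 h0 with h1 | h1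
      · exact h (by exact_mod_cast h1)
      · exact schur_ne_zero lam h1
  have hz : ∑ᶠ lam, (c lam μ ν : ℤ) • schur lam = 0 := by
    apply finsum_of_infinite_support
    rw [hsupport]
    exact hinf
  have := hc_smul c hc μ ν
  rw [hz] at this
  rcases mul_eq_zero.1 this with h1 | h1
  · exact schur_ne_zero μ h1
  · exact schur_ne_zero ν h1

lemma c_smul_support_finite (μ ν : YPartition) :
    (Function.support fun lam => (c lam μ ν : ℤ)).Finite := by
  apply (c_support_finite c hc μ ν).subset
  intro lam hl
  simp only [Function.mem_support] at hl
  simp only [Set.mem_setOf_eq]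
  exact_mod_cast hl

lemma c_size {lam μ ν : YPartition} (h : c lam μ ν ≠ 0) : lam.size = μ.size + ν.size := by
  classical
  by_contra hne
  set D := μ.size + ν.size with hD
  set S := {l : YPartition | c l μ ν ≠ 0 ∧ l.size ≠ D} with hSdef
  have hSfin : S.Finite := (c_support_finite c hc μ ν).subset (fun l hl => hl.1)
  have hSne : S.Nonempty := ⟨lam, h, hne⟩
  obtain ⟨lam0, hlam0, hminim⟩ :=
    Set.Finite.exists_minimalFor (fun l => (fun k => FF k l)) _ hSfin hSne
  set f : YPartition → ℤ := fun l => if l.size = D then 0 else (c l μ ν : ℤ) with hf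
  have hffin : (Function.support f).Finite := by
    apply hSfin.subset
    intro l hl
    simp only [Function.mem_support, hf] at hl
    by_cases hsz : l.size = D
    · rw [if_pos hsz] at hl
      exact absurd rfl hl
    · rw [if_neg hsz] at hl
      exact ⟨by exact_mod_cast hl, hsz⟩
  have hmin : ∀ l, f l ≠ 0 → (∀ k, FF k l ≤ FF k lam0) → l.size = lam0.size → l = lam0 := by
    intro l hfl hle hsz
    have hlS : l ∈ S := by
      simp only [hf] at hfl
      by_cases hsz' : l.size = D
      · rw [if_pos hsz'] at hfl
        exact absurd rfl hfl
      · rw [if_neg hsz'] at hfl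
        exact ⟨by exact_mod_cast hfl, hsz'⟩
    have hle' : (fun k => FF k l) ≤ (fun k => FF k lam0) := hle
    have := hminim hlS hle'
    exact FF_ext (fun k => le_antisymm (hle k) (this k))
  -- coefficient of the g-part is zero
  set g : YPartition → ℤ := fun l => if l.size = D then (c l μ ν : ℤ) else 0 with hg
  have hgfin : (Function.support g).Finite := by
    apply (c_support_finite c hc μ ν).subset
    intro l hl
    simp only [Function.mem_support, hg] at hl
    by_cases hsz : l.size = D
    · rw [if_pos hsz] at hl
      exact (by exact_mod_cast hl : c l μ ν ≠ 0)
    · rw [if_neg hsz] at hl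
      exact absurd rfl hl
  have hfg : ∀ l, (c l μ ν : ℤ) = f l + g l := by
    intro l
    simp only [hf, hg]
    by_cases hsz : l.size = D <;> simp [hsz]
  have hf' : (Function.support fun l => f l • schur l).Finite := by
    apply hffin.subset
    intro l hl
    simp only [Function.mem_support] at hl ⊢
    intro h0
    exact hl (by rw [h0, zero_smul])
  have hg' : (Function.support fun l => g l • schur l).Finite := by
    apply hgfin.subset
    intro l hl
    simp only [Function.mem_support] at hl ⊢
    intro h0
    exact hl (by rw [h0, zero_smul])
  have hsplit : schur μ * schur ν = (∑ᶠ l, f l • schur l) + (∑ᶠ l, g l • schur l) := by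
    rw [hc_smul c hc μ ν, ← finsum_add_distrib hf' hg']
    apply finsum_congr
    intro l
    rw [hfg l, add_smul]
  -- take coefficients at dd lam0
  have hcoefff := coeff_finsum_eq_single hffin lam0 hmin
  have hcoeffg : MvPolynomial.coeff (dd lam0) (∑ᶠ l, g l • schur l) = 0 := by
    set coeffHom : SymF →+ ℤ :=
      { toFun := MvPolynomial.coeff (dd lam0)
        map_zero' := MvPolynomial.coeff_zero _
        map_add' := fun p q => MvPolynomial.coeff_add _ p q } with hcoeffHom
    have hmap := AddMonoidHom.map_finsum coeffHom hg'
    rw [show MvPolynomial.coeff (dd lam0) (∑ᶠ l, g l • schur l)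
        = coeffHom (∑ᶠ l, g l • schur l) from rfl, hmap]
    apply finsum_eq_zero_of_forall_eq_zero
    intro l
    show MvPolynomial.coeff (dd lam0) (g l • schur l) = 0
    rw [MvPolynomial.coeff_smul, smul_eq_mul]
    by_cases hco : MvPolynomial.coeff (dd lam0) (schur l) = 0
    · rw [hco, mul_zero]
    · have hle := coeff_dd_le hco
      have hsz : l.size = lam0.size := hle.2
      have : l.size ≠ D := by rw [hsz]; exact hlam0.2
      simp only [hg, if_neg this, zero_mul]
  have hcoeffL : MvPolynomial.coeff (dd lam0) (schur μ * schur ν) = 0 := by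
    apply MvPolynomial.IsWeightedHomogeneous.coeff_eq_zero
      ((schur_homog μ).mul (schur_homog ν))
    rw [show (Finsupp.weight (fun n => n + 1)) (dd lam0) = lam0.size from weight_dd lam0]
    exact hlam0.2
  have : (0 : ℤ) = f lam0 := by
    have := congrArg (MvPolynomial.coeff (dd lam0)) hsplit
    rw [hcoeffL, MvPolynomial.coeff_add, hcoefff, hcoeffg, add_zero] at this
    exact this
  have hflam0 : f lam0 ≠ 0 := by
    simp only [hf, if_neg hlam0.2]
    exact_mod_cast hlam0.1
  exact hflam0 this.symm

end CProps

end KT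

section Main

open KT

lemma c_symm (c : YPartition → YPartition → YPartition → ℕ)
    (hc : ∀ μ ν : YPartition,
      schur μ * schur ν = ∑ᶠ lam : YPartition, (c lam μ ν : SymF) * schur lam)
    (ω : SymF →ₐ[ℤ] SymF)
    (hω : ∀ ν : YPartition, ω (schur ν) = schur ν.transpose)
    (lam μ ν : YPartition) :
    c lam μ ν = c lam.transpose μ.transpose ν.transpose := by
  classical
  set Ω : SymF →+ SymF := ω.toLinearMap.toAddMonoidHom with hΩ
  have hsupp : (Function.support fun l => (c l μ ν : ℤ) • schur l).Finite := by
    apply (c_support_finite c hc μ ν).subset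
    intro l hl
    simp only [Function.mem_support] at hl
    simp only [Set.mem_setOf_eq]
    intro h0
    apply hl
    rw [h0]
    simp
  have key : ∑ᶠ l, (c l μ.transpose ν.transpose : ℤ) • schur l
      = ∑ᶠ l, (c l.transpose μ ν : ℤ) • schur l := by
    calc ∑ᶠ l, (c l μ.transpose ν.transpose : ℤ) • schur l
        = schur μ.transpose * schur ν.transpose := (hc_smul c hc μ.transpose ν.transpose).symm
      _ = ω (schur μ * schur ν) := by rw [map_mul, hω, hω]
      _ = Ω (∑ᶠ l, (c l μ ν : ℤ) • schur l) := by rw [hc_smul c hc μ ν]; rfl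
      _ = ∑ᶠ l, Ω ((c l μ ν : ℤ) • schur l) := AddMonoidHom.map_finsum Ω hsupp
      _ = ∑ᶠ l, (c l μ ν : ℤ) • schur l.transpose := by
          apply finsum_congr
          intro l
          rw [show Ω ((c l μ ν : ℤ) • schur l) = ω ((c l μ ν : ℤ) • schur l) from rfl,
            map_zsmul, hω]
      _ = ∑ᶠ l, (c l.transpose μ ν : ℤ) • schur l := by
          rw [← finsum_comp_equiv transposeEquiv
            (f := fun l => (c l.transpose μ ν : ℤ) • schur l)]
          apply finsum_congr
          intro l
          show (c l μ ν : ℤ) • schur l.transpose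
              = (c (transposeEquiv l).transpose μ ν : ℤ) • schur (transposeEquiv l)
          have he : (transposeEquiv l : YPartition) = l.transpose := rfl
          rw [he, transpose_transpose]
  have huniq := schur_expansion_unique
    (c_smul_support_finite c hc μ.transpose ν.transpose)
    (by
      have h1 := c_smul_support_finite c hc μ ν
      have : (Function.support fun l => (c l.transpose μ ν : ℤ))
          ⊆ YPartition.transpose ⁻¹' (Function.support fun l => (c l μ ν : ℤ)) := by
        intro l hl
        exact hl
      exact (h1.preimage transpose_injective.injOn).subset this)
    key
  have h1 := huniq lam.transpose
  rw [transpose_transpose] at h1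
  have h2 : c lam.transpose μ.transpose ν.transpose = c lam μ ν := by exact_mod_cast h1
  exact h2.symm

end Main

end Aux

/-- Koike–Terada duality: `ω(s^Sp_{[λ]}) = s^O_{[λ†]}`, where `ω` is the
algebra involution of `Λ` sending `s_ν` to `s_{ν†}`. -/
theorem omega_sSp_eq_sO_transpose
    (c : YPartition → YPartition → YPartition → ℕ)
    (hc : ∀ μ ν : YPartition,
      schur μ * schur ν = ∑ᶠ lam : YPartition, (c lam μ ν : SymF) * schur lam)
    (ω : SymF →ₐ[ℤ] SymF)
    (hω : ∀ ν : YPartition, ω (schur ν) = schur ν.transpose)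
    (lam : YPartition) :
    ω (sSp c lam) = sO c lam.transpose := by
  classical
  set Ω : SymF →+ SymF := ω.toLinearMap.toAddMonoidHom with hΩ
  have hsupin : ∀ (l μ : YPartition),
      (Function.support fun ν => ((-1:ℤ)^(μ.size/2) * (c l μ ν : ℤ)) • schur ν).Finite := by
    intro l μ
    apply (KT.finite_size_le l.size).subset
    intro ν hν
    simp only [Function.mem_support] at hν
    have hcne : c l μ ν ≠ 0 := by
      intro h0
      apply hν
      rw [h0]
      simp
    have := KT.c_size c hc hcne
    simp only [Set.mem_setOf_eq]
    omega
  have hsupout : (Function.support fun μ => if YPartition.Qneg μ then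
      (∑ᶠ ν, ((-1:ℤ)^(μ.size/2) * (c lam μ ν : ℤ)) • schur ν) else 0).Finite := by
    apply (KT.finite_size_le lam.size).subset
    intro μ hμ
    simp only [Function.mem_support] at hμ
    by_cases hQ : YPartition.Qneg μ
    · rw [if_pos hQ] at hμ
      by_contra hbig
      simp only [Set.mem_setOf_eq, not_le] at hbig
      apply hμ
      apply finsum_eq_zero_of_forall_eq_zero
      intro ν
      have hcz : c lam μ ν = 0 := by
        by_contra hcne
        have := KT.c_size c hc hcne
        omega
      rw [hcz]
      simp
    · rw [if_neg hQ] at hμ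
      exact absurd rfl hμ
  have h1 : sSp c lam = ∑ᶠ μ, (if YPartition.Qneg μ then
      (∑ᶠ ν, ((-1:ℤ)^(μ.size/2) * (c lam μ ν : ℤ)) • schur ν) else 0) := by
    unfold sSp
    exact finsum_congr (fun μ => finsum_eq_if)
  have h2 : ω (sSp c lam) = ∑ᶠ μ, (if YPartition.Qneg μ then
      (∑ᶠ ν, ((-1:ℤ)^(μ.size/2) * (c lam μ ν : ℤ)) • schur ν.transpose) else 0) := by
    rw [h1]
    calc Ω (∑ᶠ μ, (if YPartition.Qneg μ then
        (∑ᶠ ν, ((-1:ℤ)^(μ.size/2) * (c lam μ ν : ℤ)) • schur ν) else 0))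
        = ∑ᶠ μ, Ω (if YPartition.Qneg μ then
          (∑ᶠ ν, ((-1:ℤ)^(μ.size/2) * (c lam μ ν : ℤ)) • schur ν) else 0) :=
        AddMonoidHom.map_finsum Ω hsupout
      _ = _ := by
        apply finsum_congr
        intro μ
        by_cases hQ : YPartition.Qneg μ
        · rw [if_pos hQ, if_pos hQ]
          calc Ω (∑ᶠ ν, ((-1:ℤ)^(μ.size/2) * (c lam μ ν : ℤ)) • schur ν)
              = ∑ᶠ ν, Ω (((-1:ℤ)^(μ.size/2) * (c lam μ ν : ℤ)) • schur ν) :=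
              AddMonoidHom.map_finsum Ω (hsupin lam μ)
            _ = _ := by
              apply finsum_congr
              intro ν
              show ω (((-1:ℤ)^(μ.size/2) * (c lam μ ν : ℤ)) • schur ν) = _
              rw [map_zsmul, hω]
        · rw [if_neg hQ, if_neg hQ]
          exact map_zero Ω
  have h3 : ∀ μ : YPartition,
      (∑ᶠ ν, ((-1:ℤ)^(μ.size/2) * (c lam μ ν : ℤ)) • schur ν.transpose)
      = ∑ᶠ ν, ((-1:ℤ)^(μ.size/2) * (c lam.transpose μ.transpose ν : ℤ)) • schur ν := by
    intro μ
    rw [← finsum_comp_equiv KT.transposeEquiv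
      (f := fun ν => ((-1:ℤ)^(μ.size/2) * (c lam.transpose μ.transpose ν : ℤ)) • schur ν)]
    apply finsum_congr
    intro ν
    show ((-1:ℤ)^(μ.size/2) * (c lam μ ν : ℤ)) • schur ν.transpose
        = ((-1:ℤ)^(μ.size/2) * (c lam.transpose μ.transpose (KT.transposeEquiv ν) : ℤ))
          • schur (KT.transposeEquiv ν)
    have he : (KT.transposeEquiv ν : YPartition) = ν.transpose := rfl
    rw [he, c_symm c hc ω hω lam μ ν]
  have h4 : ∑ᶠ μ, (if YPartition.Qneg μ then
      (∑ᶠ ν, ((-1:ℤ)^(μ.size/2) * (c lam.transpose μ.transpose ν : ℤ)) • schur ν) else 0)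
      = ∑ᶠ μ, (if YPartition.Qpos μ then
      (∑ᶠ ν, ((-1:ℤ)^(μ.size/2) * (c lam.transpose μ ν : ℤ)) • schur ν) else 0) := by
    rw [← finsum_comp_equiv KT.transposeEquiv (f := fun μ => if YPartition.Qpos μ then
      (∑ᶠ ν, ((-1:ℤ)^(μ.size/2) * (c lam.transpose μ ν : ℤ)) • schur ν) else 0)]
    apply finsum_congr
    intro μ
    show (if YPartition.Qneg μ then
        (∑ᶠ ν, ((-1:ℤ)^(μ.size/2) * (c lam.transpose μ.transpose ν : ℤ)) • schur ν) else 0)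
      = (if YPartition.Qpos (KT.transposeEquiv μ) then
        (∑ᶠ ν, ((-1:ℤ)^(((KT.transposeEquiv μ : YPartition)).size/2)
          * (c lam.transpose (KT.transposeEquiv μ) ν : ℤ)) • schur ν) else 0)
    have he : (KT.transposeEquiv μ : YPartition) = μ.transpose := rfl
    rw [he]
    have hQ : YPartition.Qpos μ.transpose = YPartition.Qneg μ := by
      show YPartition.Qneg μ.transpose.transpose = YPartition.Qneg μ
      rw [KT.transpose_transpose]
    rw [hQ, KT.size_transpose]
  have h5 : sO c lam.transpose = ∑ᶠ μ, (if YPartition.Qpos μ then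
      (∑ᶠ ν, ((-1:ℤ)^(μ.size/2) * (c lam.transpose μ ν : ℤ)) • schur ν) else 0) := by
    unfold sO
    exact finsum_congr (fun μ => finsum_eq_if)
  calc ω (sSp c lam)
      = ∑ᶠ μ, (if YPartition.Qneg μ then
        (∑ᶠ ν, ((-1:ℤ)^(μ.size/2) * (c lam μ ν : ℤ)) • schur ν.transpose) else 0) := h2
    _ = ∑ᶠ μ, (if YPartition.Qneg μ then
        (∑ᶠ ν, ((-1:ℤ)^(μ.size/2) * (c lam.transpose μ.transpose ν : ℤ)) • schur ν) else 0) := by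
        apply finsum_congr
        intro μ
        rw [h3 μ]
    _ = ∑ᶠ μ, (if YPartition.Qpos μ then
        (∑ᶠ ν, ((-1:ℤ)^(μ.size/2) * (c lam.transpose μ ν : ℤ)) • schur ν) else 0) := h4
    _ = sO c lam.transpose := h5.symm
end

section
/- Symplectic exterior power decomposition in the stable range: the character of ⋀^k of the vector representation V of Sp(2n), for n ≥ k, equals Σ_{0 ≤ r ≤ k/2} char(V^Sp_{(1^{k−2r})}); i.e., ⋀^k V ≅ ⊕_{0 ≤ r ≤ k/2} V^Sp_{(1^{k−2r})} as Sp(2n)-representations. -/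
open scoped BigOperators

set_option synthInstance.maxHeartbeats 400000
set_option maxHeartbeats 1000000

namespace SpAux


open Polynomial Finset

noncomputable def pc : ℕ → Polynomial ℤ
  | 0 => 1
  | 1 => Polynomial.X
  | (d+2) => Polynomial.X * pc (d+1) - pc d

lemma pc_zero : pc 0 = 1 := rfl
lemma pc_one : pc 1 = Polynomial.X := rfl
lemma pc_add_two (d : ℕ) : pc (d+2) = Polynomial.X * pc (d+1) - pc d := rfl

lemma pc_monic_natDegree (d : ℕ) : (pc d).Monic ∧ (pc d).natDegree = d := by
  induction d using Nat.strong_induction_on with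
  | _ d ih =>
    match d with
    | 0 => exact ⟨monic_one, natDegree_one⟩
    | 1 => exact ⟨monic_X, natDegree_X⟩
    | (e+2) =>
      obtain ⟨h1m, h1d⟩ := ih (e+1) (by omega)
      obtain ⟨h0m, h0d⟩ := ih e (by omega)
      have hm : (Polynomial.X * pc (e+1)).Monic := monic_X.mul h1m
      have hd : (Polynomial.X * pc (e+1)).natDegree = e+2 := by
        rw [monic_X.natDegree_mul h1m, natDegree_X, h1d]
        omega
      have hlt : (pc e).degree < (Polynomial.X * pc (e+1)).degree := by
        rw [degree_eq_natDegree h0m.ne_zero, degree_eq_natDegree hm.ne_zero, hd, h0d]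
        exact_mod_cast by omega
      constructor
      · rw [pc_add_two]
        exact hm.sub_of_left hlt
      · rw [pc_add_two, ← hd]
        exact natDegree_sub_eq_left_of_natDegree_lt (by omega)

lemma pc_monic (d : ℕ) : (pc d).Monic := (pc_monic_natDegree d).1
lemma pc_natDegree (d : ℕ) : (pc d).natDegree = d := (pc_monic_natDegree d).2

lemma pc_coeff_self (d : ℕ) : (pc d).coeff d = 1 := by
  have := pc_monic d
  rw [Polynomial.Monic, Polynomial.leadingCoeff, pc_natDegree] at this
  exact this

lemma pc_coeff_gt {d e : ℕ} (h : d < e) : (pc d).coeff e = 0 :=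
  coeff_eq_zero_of_natDegree_lt (by rw [pc_natDegree]; exact h)

lemma X_mul_pc (c : ℕ) :
    Polynomial.X * pc c = pc (c+1) + if c = 0 then 0 else pc (c-1) := by
  match c with
  | 0 => simp [pc_zero, pc_one]
  | (c+1) => simp [pc_add_two]

def chZ (d : ℕ) (s : ℤ) : ℤ := if s < 0 then 0 else (d.choose s.toNat : ℤ)

lemma chZ_neg {d : ℕ} {s : ℤ} (h : s < 0) : chZ d s = 0 := by simp [chZ, h]

lemma chZ_nonneg (d : ℕ) (s : ℕ) : chZ d (s : ℤ) = (d.choose s : ℤ) := by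
  simp [chZ]

lemma chZ_pascal (d : ℕ) (s : ℤ) : chZ (d+1) s = chZ d s + chZ d (s-1) := by
  rcases lt_trichotomy s 0 with h | h | h
  · rw [chZ_neg h, chZ_neg h, chZ_neg (by omega)]; ring
  · subst h; simp [chZ]
  · obtain ⟨t, rfl⟩ : ∃ t : ℕ, s = (t : ℤ) + 1 := ⟨(s-1).toNat, by omega⟩
    have h1 : ((t : ℤ) + 1) = ((t+1 : ℕ) : ℤ) := by push_cast; ring
    rw [h1, chZ_nonneg, chZ_nonneg]
    have h2 : ((t+1:ℕ) : ℤ) - 1 = (t : ℤ) := by push_cast; ring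
    rw [h2, chZ_nonneg, Nat.choose_succ_succ']
    push_cast; ring

def bb (d c : ℕ) : ℤ :=
  if c ≤ d ∧ (d - c) % 2 = 0 then
    chZ d (((d - c)/2 : ℕ) : ℤ) - chZ d ((((d - c)/2 : ℕ) : ℤ) - 1)
  else 0

lemma bb_self (d : ℕ) : bb d d = 1 := by
  simp [bb, chZ]

lemma bb_zero_of_gt {d c : ℕ} (h : d < c) : bb d c = 0 := by
  simp only [bb, ite_eq_right_iff]
  intro hc; omega

lemma bb_eval (d c s : ℕ) (hs : d = c + 2*s) :
    bb d c = chZ d (s : ℤ) - chZ d ((s:ℤ) - 1) := by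
  have h1 : c ≤ d ∧ (d - c) % 2 = 0 := by omega
  have h2 : (d - c)/2 = s := by omega
  rw [bb, if_pos h1, h2]

lemma bb_odd {d c : ℕ} (h : (d - c) % 2 = 1) : bb d c = 0 := by
  rw [bb, if_neg]; omega

lemma bb_pascal (d c : ℕ) :
    bb (d+1) c = (if c = 0 then 0 else bb d (c-1)) + bb d (c+1) := by
  by_cases hpar : (d + 1 - c) % 2 = 0
  swap
  · -- odd difference: c ≤ d necessarily, and everything vanishes
    have hcd : c ≤ d := by omega
    have hL : bb (d+1) c = 0 := bb_odd (show (d + 1 - c) % 2 = 1 by omega)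
    have e1 : bb d (c+1) = 0 := by
      rcases Nat.lt_or_ge d (c+1) with h2 | h2
      · exact bb_zero_of_gt h2
      · exact bb_odd (show (d - (c+1)) % 2 = 1 by omega)
    rw [hL, e1]
    rcases Nat.eq_zero_or_pos c with rfl | hc0
    · simp
    · rw [if_neg (show ¬ (c = 0) by omega)]
      have e2 : bb d (c-1) = 0 := bb_odd (show (d - (c-1)) % 2 = 1 by omega)
      rw [e2]; ring
  · -- even difference: c ≤ d+1 or not
    rcases Nat.lt_or_ge (d+1) c with hdc | hdc
    · -- c > d+1
      rw [bb_zero_of_gt (show d + 1 < c from hdc)]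
      rw [bb_zero_of_gt (show d < c + 1 by omega)]
      rcases Nat.eq_zero_or_pos c with rfl | hc0
      · omega
      · rw [if_neg (show ¬ (c = 0) by omega), bb_zero_of_gt (show d < c - 1 by omega)]
        ring
    · -- c ≤ d+1, (d+1-c) even: write d+1 = c + 2*s
      obtain ⟨s, hs⟩ : ∃ s : ℕ, d + 1 = c + 2*s := ⟨(d+1-c)/2, by omega⟩
      rw [bb_eval (d+1) c s hs]
      rcases Nat.eq_zero_or_pos c with rfl | hc0
      · -- c = 0 : d+1 = 2s, s ≥ 1; RHS = bb d 1 with d = 1 + 2*(s-1)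
        have hs1 : 1 ≤ s := by omega
        rw [if_pos rfl, zero_add, bb_eval d 1 (s-1) (by omega)]
        rw [chZ_pascal, chZ_pascal]
        have hc1 : ((s - 1 : ℕ) : ℤ) = (s : ℤ) - 1 := by omega
        rw [hc1]
        have hsym : chZ d (s : ℤ) = chZ d ((s:ℤ) - 1) := by
          rw [← hc1, chZ_nonneg, chZ_nonneg]
          have h2 : s - 1 = d - s := by omega
          rw [h2, Nat.choose_symm (by omega)]
        rw [hsym]; ring
      · -- c ≥ 1
        rw [if_neg (show ¬ (c = 0) by omega), bb_eval d (c-1) s (by omega)]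
        rw [chZ_pascal, chZ_pascal]
        rcases Nat.eq_zero_or_pos s with rfl | hs0
        · -- s = 0: c = d+1; bb d (c+1) = 0 since d < c+1
          rw [bb_zero_of_gt (show d < c+1 by omega)]
          simp only [Nat.cast_zero, zero_sub]
          rw [chZ_neg (show (-1:ℤ) < 0 by norm_num),
            chZ_neg (show (-1:ℤ) - 1 < 0 by norm_num)]
          ring
        · rw [bb_eval d (c+1) (s-1) (by omega)]
          have hc1 : ((s - 1 : ℕ) : ℤ) = (s : ℤ) - 1 := by omega
          rw [hc1]; ring

lemma Xpow_eq_sum (d : ℕ) :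
    (Polynomial.X : Polynomial ℤ)^d = ∑ c ∈ range (d+1), Polynomial.C (bb d c) * pc c := by
  induction d with
  | zero => simp [bb_self, pc_zero]
  | succ d ih =>
    have step : (Polynomial.X : Polynomial ℤ)^(d+1)
        = ∑ c ∈ range (d+1), Polynomial.C (bb d c) * (Polynomial.X * pc c) := by
      rw [pow_succ, ih, Finset.sum_mul]
      congr 1; ext c; ring
    rw [step]
    have expand : ∀ c ∈ range (d+1), Polynomial.C (bb d c) * (Polynomial.X * pc c)
        = Polynomial.C (bb d c) * pc (c+1)
          + (if c = 0 then 0 else Polynomial.C (bb d c) * pc (c-1)) := by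
      intro c _
      rw [X_mul_pc, mul_add]
      congr 1
      split <;> simp
    rw [Finset.sum_congr rfl expand, Finset.sum_add_distrib]
    -- first sum: reindex
    have first : ∑ c ∈ range (d+1), Polynomial.C (bb d c) * pc (c+1)
        = ∑ c ∈ range (d+2), (if c = 0 then 0 else Polynomial.C (bb d (c-1)) * pc c) := by
      rw [Finset.sum_range_succ' (fun c => if c = 0 then 0 else Polynomial.C (bb d (c-1)) * pc c) (d+1)]
      simp
    -- second sum: reindex down
    have second : ∑ c ∈ range (d+1), (if c = 0 then 0 else Polynomial.C (bb d c) * pc (c-1))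
        = ∑ c ∈ range (d+2), Polynomial.C (bb d (c+1)) * pc c := by
      rw [Finset.sum_range_succ' (fun c => if c = 0 then 0 else Polynomial.C (bb d c) * pc (c-1)) d]
      simp only [if_neg (Nat.succ_ne_zero _), Nat.add_sub_cancel, if_pos rfl, add_zero]
      rw [Finset.sum_range_succ (fun c => Polynomial.C (bb d (c+1)) * pc c) (d+1)]
      rw [Finset.sum_range_succ (fun c => Polynomial.C (bb d (c+1)) * pc c) d]
      rw [bb_zero_of_gt (show d < d + 1 by omega), bb_zero_of_gt (show d < d + 2 by omega)]
      simp
    rw [first, second, ← Finset.sum_add_distrib]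
    refine Finset.sum_congr rfl fun c _ => ?_
    rw [bb_pascal d c, Polynomial.C_add, add_mul]
    congr 1
    by_cases hc : c = 0
    · simp [hc]
    · rw [if_neg hc, if_neg hc]

noncomputable def pev {F : Type*} [Field F] (y : F) (P : Polynomial ℤ) : F :=
  Polynomial.eval y (P.map (Int.castRingHom F))

lemma pev_C {F : Type*} [Field F] (y : F) (z : ℤ) : pev y (Polynomial.C z) = (z : F) := by
  simp [pev]

lemma pc_eval {F : Type*} [Field F] (x : F) (hx : x ≠ 0) (d : ℕ) :
    (x - x⁻¹) * pev (x + x⁻¹) (pc d) = x^(d+1) - (x⁻¹)^(d+1) := by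
  induction d using Nat.strong_induction_on with
  | _ d ih =>
    match d with
    | 0 => simp [pc_zero, pev]
    | 1 =>
      simp only [pc_one, pev, Polynomial.map_X, Polynomial.eval_X]
      simp only [inv_pow]
      field_simp
      ring
    | (e+2) =>
      have h1 := ih (e+1) (by omega)
      have h0 := ih e (by omega)
      simp only [pev, pc_add_two, Polynomial.map_sub, Polynomial.map_mul, Polynomial.map_X,
        Polynomial.eval_sub, Polynomial.eval_mul, Polynomial.eval_X] at h1 h0 ⊢
      have expand : (x - x⁻¹) * ((x + x⁻¹) * Polynomial.eval (x + x⁻¹)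
            ((pc (e+1)).map (Int.castRingHom F))
          - Polynomial.eval (x + x⁻¹) ((pc e).map (Int.castRingHom F)))
          = (x + x⁻¹) * ((x - x⁻¹) * Polynomial.eval (x + x⁻¹)
            ((pc (e+1)).map (Int.castRingHom F)))
          - (x - x⁻¹) * Polynomial.eval (x + x⁻¹) ((pc e).map (Int.castRingHom F)) := by ring
      rw [expand, h1, h0]
      simp only [inv_pow]
      field_simp
      ring

variable {n : ℕ}

lemma xv_ne_zero {n : ℕ} (j : Fin n) : xv j ≠ 0 := by
  intro h
  have hinj := IsFractionRing.injective (MvPolynomial (Fin n) ℤ) (KK n)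
  have h0 : (MvPolynomial.X j : MvPolynomial (Fin n) ℤ) = 0 := by
    apply hinj
    simpa [xv] using h
  exact MvPolynomial.X_ne_zero j h0

noncomputable def PP (n : ℕ) : KK n := ∏ j : Fin n, (xv j - (xv j)⁻¹)

noncomputable def yv (n : ℕ) (j : Fin n) : KK n := xv j + (xv j)⁻¹

def dI (n m : ℕ) (i : Fin n) : ℕ := if (i:ℕ) < m then n - i else n - 1 - i

noncomputable def Ap (n p : ℕ) : KK n :=
  (Matrix.of fun i j : Fin n => yv n j ^ dI n p i).det

noncomputable def Gm (n m : ℕ) : KK n :=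
  (Matrix.of fun i j : Fin n => pev (yv n j) (pc (dI n m i))).det

noncomputable def eY (n p : ℕ) : KK n :=
  ∑ T ∈ Finset.powersetCard p (Finset.univ : Finset (Fin n)), ∏ j ∈ T, yv n j

def wc (n k p : ℕ) : ℤ :=
  if p ≤ k ∧ (k - p) % 2 = 0 then ((n-p).choose ((k-p)/2) : ℤ) else 0

lemma entry_eq (n m : ℕ) (hm : m ≤ n) (i j : Fin n) :
    xv j ^ (((YPartition.colP m).parts i : ℤ) + n - i)
      - xv j ^ (-(((YPartition.colP m).parts i : ℤ) + n - i))
    = (xv j - (xv j)⁻¹) * pev (yv n j) (pc (dI n m i)) := by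
  have hx := xv_ne_zero j
  have hi := i.isLt
  have hexp : ((YPartition.colP m).parts i : ℤ) + n - i = ((dI n m i + 1 : ℕ) : ℤ) := by
    simp only [YPartition.colP, YPartition.parts, dI]
    split_ifs <;> omega
  have hz2 : xv j ^ (-(((dI n m i + 1 : ℕ)) : ℤ)) = ((xv j)⁻¹) ^ (dI n m i + 1) := by
    rw [zpow_neg, zpow_natCast, inv_pow]
  rw [hexp, hz2, zpow_natCast]
  rw [show yv n j = xv j + (xv j)⁻¹ from rfl]
  exact (pc_eval (xv j) hx (dI n m i)).symm

lemma num_eq (n m : ℕ) (hm : m ≤ n) :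
    (Matrix.of fun i j : Fin n =>
      xv j ^ (((YPartition.colP m).parts i : ℤ) + n - i)
        - xv j ^ (-(((YPartition.colP m).parts i : ℤ) + n - i))).det
    = PP n * Gm n m := by
  have hmat : (Matrix.of fun i j : Fin n =>
      xv j ^ (((YPartition.colP m).parts i : ℤ) + n - i)
        - xv j ^ (-(((YPartition.colP m).parts i : ℤ) + n - i)))
      = Matrix.of fun i j : Fin n =>
          (xv j - (xv j)⁻¹) * pev (yv n j) (pc (dI n m i)) := by
    ext i j
    exact entry_eq n m hm i j
  rw [hmat]
  exact Matrix.det_mul_row (fun j : Fin n => xv j - (xv j)⁻¹)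
    (Matrix.of fun i j : Fin n => pev (yv n j) (pc (dI n m i)))

lemma den_eq (n : ℕ) :
    (Matrix.of fun i j : Fin n =>
      xv j ^ ((n : ℤ) - i) - xv j ^ (-((n : ℤ) - i))).det = PP n * Gm n 0 := by
  have hmat : (Matrix.of fun i j : Fin n =>
      xv j ^ ((n : ℤ) - i) - xv j ^ (-((n : ℤ) - i)))
      = Matrix.of fun i j : Fin n =>
          xv j ^ (((YPartition.colP 0).parts i : ℤ) + n - i)
            - xv j ^ (-(((YPartition.colP 0).parts i : ℤ) + n - i)) := by
    ext i j
    have : ((YPartition.colP 0).parts i : ℤ) = 0 := by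
      simp [YPartition.colP, YPartition.parts]
    rw [Matrix.of_apply, Matrix.of_apply, this]
    norm_num
  rw [hmat, num_eq n 0 (Nat.zero_le n)]

lemma sum_reflect {F : Type*} [AddCommMonoid F] (f : ℕ → F) (Nn : ℕ) :
    ∑ i : Fin (Nn+1), f (Nn - (i:ℕ)) = ∑ e ∈ Finset.range (Nn+1), f e := by
  rw [Fin.sum_univ_eq_sum_range (fun t => f (Nn - t)) (Nn+1),
    ← Finset.sum_range_reflect f (Nn+1)]
  refine Finset.sum_congr rfl fun j hj => ?_
  have he : Nn + 1 - 1 - j = Nn - j := by omega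
  rw [he]

lemma pev_eq_sum {F : Type*} [Field F] (y : F) (d Nn : ℕ) (hd : d ≤ Nn) :
    pev y (pc d) = ∑ e ∈ Finset.range (Nn+1), ((pc d).coeff e : F) * y ^ e := by
  rw [pev, Polynomial.eval_eq_sum_range' (n := Nn+1)
    (lt_of_le_of_lt (le_trans Polynomial.natDegree_map_le (le_of_eq (pc_natDegree d)))
      (by omega)) y]
  refine Finset.sum_congr rfl fun e _ => ?_
  rw [Polynomial.coeff_map]
  rfl

lemma orth (Nn d c : ℕ) (hd : d ≤ Nn) :
    (∑ e ∈ Finset.range (Nn+1), bb d e * (pc e).coeff c) = if d = c then 1 else 0 := by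
  have h := congrArg (fun q : Polynomial ℤ => q.coeff c) (Xpow_eq_sum d)
  simp only [Polynomial.finset_sum_coeff, Polynomial.coeff_C_mul,
    Polynomial.coeff_X_pow] at h
  have hext : ∑ e ∈ Finset.range (Nn+1), bb d e * (pc e).coeff c
      = ∑ e ∈ Finset.range (d+1), bb d e * (pc e).coeff c := by
    symm
    apply Finset.sum_subset (Finset.range_subset_range.mpr (show d+1 ≤ Nn+1 by omega))
    intro e _ he
    simp only [Finset.mem_range] at he
    rw [bb_zero_of_gt (by omega), zero_mul]
  rw [hext, ← h]
  by_cases hdc : d = c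
  · rw [if_pos hdc, if_pos (by omega)]
  · rw [if_neg hdc, if_neg (by omega)]

lemma orth2 (n d c : ℕ) (hd : d ≤ n) (hc : c ≤ n) :
    (∑ e ∈ Finset.range (n+1), (pc d).coeff e * bb e c) = if d = c then 1 else 0 := by
  classical
  set ZA : Matrix (Fin (n+1)) (Fin (n+1)) ℤ :=
    Matrix.of (fun i j => (pc (i:ℕ)).coeff (j:ℕ)) with hZA
  set ZB : Matrix (Fin (n+1)) (Fin (n+1)) ℤ :=
    Matrix.of (fun i j => bb (i:ℕ) (j:ℕ)) with hZB
  have hBA : ZB * ZA = 1 := by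
    ext i k
    rw [Matrix.mul_apply, Matrix.one_apply]
    have h := orth n (i:ℕ) (k:ℕ) (by omega)
    rw [← Fin.sum_univ_eq_sum_range (fun e => bb (i:ℕ) e * (pc e).coeff (k:ℕ)) (n+1)] at h
    rw [show (∑ j : Fin (n+1), ZB i j * ZA j k)
      = ∑ j : Fin (n+1), bb (i:ℕ) (j:ℕ) * (pc (j:ℕ)).coeff (k:ℕ) from rfl, h]
    by_cases hik : i = k
    · rw [if_pos (by rw [hik]), if_pos hik]
    · rw [if_neg (fun hh => hik (Fin.ext hh)), if_neg hik]
  have hAB : ZA * ZB = 1 := mul_eq_one_comm.mp hBA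
  have h2 : (ZA * ZB) ⟨d, by omega⟩ ⟨c, by omega⟩
      = (1 : Matrix (Fin (n+1)) (Fin (n+1)) ℤ) ⟨d, by omega⟩ ⟨c, by omega⟩ := by rw [hAB]
  rw [Matrix.mul_apply, Matrix.one_apply] at h2
  rw [show (∑ j : Fin (n+1), ZA ⟨d, by omega⟩ j * ZB j ⟨c, by omega⟩)
    = ∑ j : Fin (n+1), (pc d).coeff (j:ℕ) * bb (j:ℕ) c from rfl] at h2
  rw [Fin.sum_univ_eq_sum_range (fun e => (pc d).coeff e * bb e c) (n+1)] at h2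
  rw [h2]
  by_cases hdc : d = c
  · rw [if_pos (Fin.ext hdc), if_pos hdc]
  · rw [if_neg (fun hh => hdc (by simpa using Fin.ext_iff.mp hh)), if_neg hdc]

lemma dagger (n m : ℕ) (hm : m ≤ n) :
    Gm n m = ∑ p ∈ Finset.range (n+1), (bb (n-p) (n-m) : KK n) * Ap n p := by
  classical
  set mfin : Fin (n+1) := ⟨m, by omega⟩ with hmfin
  set M : Matrix (Fin (n+1)) (Fin (n+1)) (KK n) := Matrix.of (fun i j =>
    if h : (j:ℕ) < n then pev (yv n ⟨(j:ℕ), h⟩) (pc (n - (i:ℕ)))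
    else (if i = mfin then 1 else 0)) with hMdef
  set N : Matrix (Fin (n+1)) (Fin (n+1)) (KK n) := Matrix.of (fun i j =>
    if h : (j:ℕ) < n then yv n ⟨(j:ℕ), h⟩ ^ (n - (i:ℕ))
    else ((bb (n - (i:ℕ)) (n - m) : ℤ) : KK n)) with hNdef
  set Cm : Matrix (Fin (n+1)) (Fin (n+1)) (KK n) := Matrix.of (fun i j =>
    (((pc (n - (i:ℕ))).coeff (n - (j:ℕ)) : ℤ) : KK n)) with hCmdef
  have hsa : ∀ (a : Fin (n+1)) (i' : Fin n),
      n - ((a.succAbove i') : ℕ) = dI n (a:ℕ) i' := by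
    intro a i'
    have hv : ((a.succAbove i') : ℕ) = if (i':ℕ) < (a:ℕ) then (i':ℕ) else (i':ℕ)+1 := by
      by_cases h : (i':ℕ) < (a:ℕ)
      · rw [if_pos h, Fin.succAbove_of_castSucc_lt _ _ (by rw [Fin.lt_def]; simpa using h)]
        simp
      · rw [if_neg h, Fin.succAbove_of_le_castSucc _ _ (by rw [Fin.le_def]; simpa using h)]
        simp
    rw [hv, dI]
    split_ifs <;> omega
  have hcol : ∀ (j : Fin n), ((Fin.last n).succAbove j : ℕ) < n := by
    intro j
    rw [Fin.succAbove_last]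
    simpa using j.isLt
  -- M = Cm * N
  have hMN : M = Cm * N := by
    ext i j
    rw [Matrix.mul_apply]
    by_cases hj : (j:ℕ) < n
    · have hM : M i j = pev (yv n ⟨(j:ℕ), hj⟩) (pc (n - (i:ℕ))) := by
        rw [hMdef, Matrix.of_apply, dif_pos hj]
      have hsum : ∀ i' : Fin (n+1), Cm i i' * N i' j
          = ((pc (n-(i:ℕ))).coeff (n-(i':ℕ)) : KK n) * (yv n ⟨(j:ℕ),hj⟩) ^ (n - (i':ℕ)) := by
        intro i'
        rw [hCmdef, hNdef, Matrix.of_apply, Matrix.of_apply, dif_pos hj]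
      rw [hM, Finset.sum_congr rfl (fun i' _ => hsum i'),
        sum_reflect (fun e => ((pc (n-(i:ℕ))).coeff e : KK n) * (yv n ⟨(j:ℕ),hj⟩)^e) n]
      exact pev_eq_sum (yv n ⟨(j:ℕ),hj⟩) (n-(i:ℕ)) n (by omega)
    · have hM : M i j = (if i = mfin then 1 else 0) := by
        rw [hMdef, Matrix.of_apply, dif_neg hj]
      have hsum : ∀ i' : Fin (n+1), Cm i i' * N i' j
          = ((pc (n-(i:ℕ))).coeff (n-(i':ℕ)) : KK n) * ((bb (n-(i':ℕ)) (n-m) : ℤ) : KK n) := by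
        intro i'
        rw [hCmdef, hNdef, Matrix.of_apply, Matrix.of_apply, dif_neg hj]
      rw [hM, Finset.sum_congr rfl (fun i' _ => hsum i'),
        sum_reflect (fun e => ((pc (n-(i:ℕ))).coeff e : KK n) * ((bb e (n-m) : ℤ) : KK n)) n]
      have hZ : ∑ e ∈ Finset.range (n+1),
          ((pc (n-(i:ℕ))).coeff e : KK n) * ((bb e (n-m) : ℤ) : KK n)
          = (((∑ e ∈ Finset.range (n+1), (pc (n-(i:ℕ))).coeff e * bb e (n-m)) : ℤ) : KK n) := by
        push_cast
        rfl
      rw [hZ, orth2 n (n-(i:ℕ)) (n-m) (by omega) (by omega)]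
      by_cases h : i = mfin
      · have hval : (i:ℕ) = m := by rw [h]
        rw [if_pos h, if_pos (show n - (i:ℕ) = n - m by omega), Int.cast_one]
      · have hval : (i:ℕ) ≠ m := fun hh => h (Fin.ext (by simpa using hh))
        have hlt := i.isLt
        rw [if_neg h, if_neg (show ¬ (n - (i:ℕ) = n - m) by omega), Int.cast_zero]
  have hdetC : Cm.det = 1 := by
    have htri : Cm.BlockTriangular id := by
      intro i j hij
      rw [hCmdef, Matrix.of_apply, pc_coeff_gt (show n - (i:ℕ) < n - (j:ℕ) by
        have := i.isLt; have := j.isLt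
        simp only [id] at hij
        rw [Fin.lt_def] at hij
        omega)]
      rw [Int.cast_zero]
    rw [Matrix.det_of_upperTriangular htri]
    have : ∀ i : Fin (n+1), Cm i i = 1 := by
      intro i
      rw [hCmdef, Matrix.of_apply, pc_coeff_self, Int.cast_one]
    rw [Finset.prod_congr rfl (fun i _ => this i), Finset.prod_const_one]
  -- det M via last column
  have hdetM : M.det = (-1 : KK n)^(m + n) * Gm n m := by
    rw [Matrix.det_succ_column M (Fin.last n)]
    rw [Finset.sum_eq_single_of_mem mfin (Finset.mem_univ _)]
    · have hlast : M mfin (Fin.last n) = 1 := by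
        rw [hMdef, Matrix.of_apply, dif_neg (by simp), if_pos rfl]
      have hminor : M.submatrix mfin.succAbove (Fin.last n).succAbove
          = Matrix.of (fun i' j : Fin n => pev (yv n j) (pc (dI n m i'))) := by
        ext i' j
        rw [Matrix.submatrix_apply, hMdef, Matrix.of_apply, Matrix.of_apply,
          dif_pos (hcol j)]
        have harg : (⟨(((Fin.last n).succAbove j) : ℕ), hcol j⟩ : Fin n) = j := by
          apply Fin.ext
          simp [Fin.succAbove_last]
        rw [harg, hsa mfin i']
      rw [hlast, hminor, Fin.val_last]
      have : Gm n m = (Matrix.of (fun i' j : Fin n => pev (yv n j) (pc (dI n m i')))).det := rfl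
      rw [← this]
      ring
    · intro i _ hne
      rw [hMdef, Matrix.of_apply, dif_neg (by simp), if_neg hne]
      ring
  -- det N via last column
  have hdetN : N.det = ∑ i : Fin (n+1),
      (-1 : KK n)^((i:ℕ) + n) * ((bb (n - (i:ℕ)) (n - m) : ℤ) : KK n) * Ap n (i:ℕ) := by
    rw [Matrix.det_succ_column N (Fin.last n)]
    refine Finset.sum_congr rfl fun i _ => ?_
    have hlast : N i (Fin.last n) = ((bb (n-(i:ℕ)) (n-m) : ℤ) : KK n) := by
      rw [hNdef, Matrix.of_apply, dif_neg (by simp)]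
    have hminor : N.submatrix i.succAbove (Fin.last n).succAbove
        = Matrix.of (fun i' j : Fin n => yv n j ^ (dI n (i:ℕ) i')) := by
      ext i' j
      rw [Matrix.submatrix_apply, hNdef, Matrix.of_apply, Matrix.of_apply,
        dif_pos (hcol j)]
      have harg : (⟨(((Fin.last n).succAbove j) : ℕ), hcol j⟩ : Fin n) = j := by
        apply Fin.ext
        simp [Fin.succAbove_last]
      rw [harg, hsa i i']
    rw [hlast, hminor, Fin.val_last]
    have : Ap n (i:ℕ) = (Matrix.of (fun i' j : Fin n => yv n j ^ (dI n (i:ℕ) i'))).det := rfl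
    rw [← this]
  -- combine
  have hMNdet : M.det = N.det := by
    rw [hMN, Matrix.det_mul, hdetC, one_mul]
  have hGm : Gm n m = (-1 : KK n)^(m+n) * N.det := by
    have h2 : (-1 : KK n)^(m+n) * ((-1 : KK n)^(m+n) * Gm n m) = Gm n m := by
      have hsq : (-1 : KK n)^(m+n) * (-1 : KK n)^(m+n) = 1 := by
        rw [← pow_add, show (m+n)+(m+n) = 2*(m+n) from by ring, pow_mul]
        norm_num
      rw [← mul_assoc, hsq, one_mul]
    calc Gm n m = (-1 : KK n)^(m+n) * ((-1 : KK n)^(m+n) * Gm n m) := h2.symm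
    _ = (-1 : KK n)^(m+n) * M.det := by rw [← hdetM]
    _ = (-1 : KK n)^(m+n) * N.det := by rw [hMNdet]
  rw [hGm, hdetN, Finset.mul_sum,
    ← Fin.sum_univ_eq_sum_range (fun p => (bb (n-p) (n-m) : KK n) * Ap n p) (n+1)]
  refine Finset.sum_congr rfl fun i _ => ?_
  by_cases hgz : (n - m ≤ n - (i:ℕ)) ∧ ((n - (i:ℕ)) - (n - m)) % 2 = 0
  · have hi := i.isLt
    have hpow : (-1 : KK n)^(m+n) * (-1 : KK n)^((i:ℕ)+n) = 1 := by
      rcases hgz with ⟨h1, h2⟩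
      have hpar2 : ((m+n) + ((i:ℕ)+n)) % 2 = 0 := by omega
      obtain ⟨t, ht⟩ : ∃ t, (m+n) + ((i:ℕ)+n) = 2*t := ⟨((m+n) + ((i:ℕ)+n))/2, by omega⟩
      rw [← pow_add, ht, pow_mul]
      norm_num
    rw [show (-1 : KK n)^(m+n) * ((-1 : KK n)^((i:ℕ)+n)
          * ((bb (n-(i:ℕ)) (n-m) : ℤ) : KK n) * Ap n (i:ℕ))
        = ((-1 : KK n)^(m+n) * (-1 : KK n)^((i:ℕ)+n))
          * (((bb (n-(i:ℕ)) (n-m) : ℤ) : KK n) * Ap n (i:ℕ)) from by ring, hpow, one_mul]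
  · rw [show bb (n-(i:ℕ)) (n-m) = 0 from by rw [bb, if_neg hgz]]
    push_cast
    ring

lemma Gm0 (n : ℕ) : Gm n 0 = Ap n 0 := by
  rw [dagger n 0 (Nat.zero_le n)]
  rw [Finset.sum_eq_single 0]
  · simp [bb_self]
  · intro p hp hne
    rw [bb_zero_of_gt (by simp at hp; omega), Int.cast_zero, zero_mul]
  · intro h
    simp at h

lemma fincard (n q : ℕ) (hq : q ≤ n) :
    (Finset.filter (fun j : Fin n => (j:ℕ) < q) Finset.univ).card = q := by
  have e : Finset.filter (fun j : Fin n => (j:ℕ) < q) Finset.univ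
      = Finset.map (Fin.castLEEmb hq) Finset.univ := by
    ext j
    simp only [Finset.mem_filter, Finset.mem_univ, true_and, Finset.mem_map]
    constructor
    · intro hj
      exact ⟨⟨(j:ℕ), hj⟩, Fin.ext rfl⟩
    · rintro ⟨a, rfl⟩
      simpa [Fin.castLEEmb] using a.isLt
  rw [e, Finset.card_map, Finset.card_univ, Fintype.card_fin]

lemma pieri (n p : ℕ) (hp : p ≤ n) : Ap n 0 * eY n p = Ap n p := by
  classical
  set pcd := Finset.powersetCard p (Finset.univ : Finset (Fin n)) with hpcd
  rw [eY, Finset.mul_sum]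
  -- Step 1: per-T column scaling
  have step1 : ∀ T ∈ pcd,
      Ap n 0 * ∏ j ∈ T, yv n j
        = (Matrix.of fun i j : Fin n =>
            yv n j ^ (n - 1 - (i:ℕ) + (if j ∈ T then 1 else 0))).det := by
    intro T _
    have hv : ∏ j ∈ T, yv n j = ∏ j : Fin n, (if j ∈ T then yv n j else 1) := by
      rw [Finset.prod_ite_mem, Finset.univ_inter]
    have hDet := Matrix.det_mul_row (fun j : Fin n => if j ∈ T then yv n j else 1)
      (Matrix.of fun i j : Fin n => yv n j ^ dI n 0 i)
    rw [hv, mul_comm,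
      show Ap n 0 = (Matrix.of fun i j : Fin n => yv n j ^ dI n 0 i).det from rfl, ← hDet]
    congr 1
    ext i j
    simp only [Matrix.of_apply]
    have hdI : dI n 0 i = n - 1 - (i:ℕ) := by simp [dI]
    by_cases hj : j ∈ T
    · rw [if_pos hj, if_pos hj, hdI, pow_add, pow_one]
      ring
    · rw [if_neg hj, if_neg hj, hdI, add_zero, one_mul]
  rw [Finset.sum_congr rfl step1]
  -- Step 2: swap the exponent shift from columns to rows
  have step2 : ∑ T ∈ pcd, (Matrix.of fun i j : Fin n =>
        yv n j ^ (n - 1 - (i:ℕ) + (if j ∈ T then 1 else 0))).det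
      = ∑ T ∈ pcd, (Matrix.of fun i j : Fin n =>
        yv n j ^ (n - 1 - (i:ℕ) + (if i ∈ T then 1 else 0))).det := by
    simp only [Matrix.det_apply, Matrix.of_apply]
    rw [Finset.sum_comm, Finset.sum_comm (s := pcd)]
    refine Finset.sum_congr rfl fun σ _ => ?_
    refine Finset.sum_nbij' (fun S => S.map σ.toEmbedding)
      (fun T => T.map σ.symm.toEmbedding) ?_ ?_ ?_ ?_ ?_
    · intro S hS
      rw [hpcd, Finset.mem_powersetCard_univ] at hS ⊢
      rw [Finset.card_map, hS]
    · intro T hT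
      rw [hpcd, Finset.mem_powersetCard_univ] at hT ⊢
      rw [Finset.card_map, hT]
    · intro S _
      ext x
      simp [Finset.mem_map_equiv]
    · intro T _
      ext x
      simp [Finset.mem_map_equiv]
    · intro S _
      congr 1
      refine Finset.prod_congr rfl fun i _ => ?_
      have h2 : (σ i ∈ S.map σ.toEmbedding) ↔ (i ∈ S) := by
        rw [Finset.mem_map_equiv]
        simp
      simp only [h2]
  rw [step2]
  -- Step 3: all terms vanish except T = T₀
  set T0 := Finset.filter (fun j : Fin n => (j:ℕ) < p) Finset.univ with hT0
  have hT0mem : T0 ∈ pcd := by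
    rw [hpcd, Finset.mem_powersetCard_univ, hT0, fincard n p hp]
  rw [Finset.sum_eq_single_of_mem T0 hT0mem]
  · -- the surviving term is Ap n p
    rw [Ap]
    congr 1
    ext i j
    simp only [Matrix.of_apply]
    congr 1
    have hi := i.isLt
    rw [hT0]
    by_cases hip : (i:ℕ) < p
    · rw [if_pos (by simp [hip]), dI, if_pos hip]
      omega
    · rw [if_neg (by simp [hip]), dI, if_neg hip]
      omega
  · -- vanishing terms
    intro T hT hne
    by_cases hcl : ∀ (b : Fin n) (a : Fin n), (a:ℕ) + 1 = (b:ℕ) → b ∈ T → a ∈ T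
    · -- downward closed: T = T0, contradiction
      exfalso
      apply hne
      have closed : ∀ d : ℕ, ∀ b ∈ T, ∀ a : Fin n, (b:ℕ) - (a:ℕ) = d → (a:ℕ) ≤ (b:ℕ) → a ∈ T := by
        intro d
        induction d with
        | zero =>
          intro b hb a hab hab2
          have : a = b := Fin.ext (by omega)
          rwa [this]
        | succ d ihd =>
          intro b hb a hab hab2
          have ha1 : (a:ℕ) + 1 < n := by
            have := b.isLt
            omega
          have ha' : (⟨(a:ℕ)+1, ha1⟩ : Fin n) ∈ T := by
            apply ihd b hb _ _ _
            · simp; omega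
            · simp; omega
          exact hcl ⟨(a:ℕ)+1, ha1⟩ a rfl ha'
      have hcardT : T.card = p := (Finset.mem_powersetCard_univ.mp (by rwa [hpcd] at hT))
      have hiff : ∀ j : Fin n, j ∈ T ↔ (j:ℕ) < p := by
        intro j
        constructor
        · intro hj
          by_contra hjp
          push_neg at hjp
          have hsub : Finset.filter (fun i : Fin n => (i:ℕ) < p+1) Finset.univ ⊆ T := by
            intro i hi
            simp only [Finset.mem_filter, Finset.mem_univ, true_and] at hi
            apply closed ((j:ℕ) - (i:ℕ)) j hj i rfl (by omega)
          have := Finset.card_le_card hsub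
          rw [fincard n (p+1) (by omega)] at this
          omega
        · intro hjp
          by_contra hjT
          have hsub : T ⊆ Finset.filter (fun i : Fin n => (i:ℕ) < (j:ℕ)) Finset.univ := by
            intro b hb
            simp only [Finset.mem_filter, Finset.mem_univ, true_and]
            by_contra hbj
            push_neg at hbj
            exact hjT (closed ((b:ℕ) - (j:ℕ)) b hb j rfl hbj)
          have := Finset.card_le_card hsub
          rw [fincard n (j:ℕ) (le_of_lt j.isLt)] at this
          omega
      ext j
      rw [hiff j, hT0, Finset.mem_filter]
      simp
    · push_neg at hcl
      obtain ⟨b, a, hab, hbT, haT⟩ := hcl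
      apply Matrix.det_zero_of_row_eq (i := a) (j := b)
      · intro h
        rw [h] at haT
        exact haT hbT
      · funext j
        simp only [Matrix.of_apply]
        congr 1
        rw [if_neg haT, if_pos hbT]
        have := b.isLt
        omega

lemma coeff_sq_add_one {F : Type*} [Field F] (N c : ℕ) :
    ((Polynomial.X^2 + 1 : Polynomial F)^N).coeff c
      = if c % 2 = 0 then (N.choose (c/2) : F) else 0 := by
  rw [add_pow, Polynomial.finset_sum_coeff]
  have term : ∀ m ∈ Finset.range (N+1),
      (((Polynomial.X^2 : Polynomial F))^m * 1^(N-m) * (N.choose m : Polynomial F)).coeff c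
        = if m = c/2 ∧ c % 2 = 0 then (N.choose m : F) else 0 := by
    intro m _
    rw [one_pow, mul_one, ← pow_mul, ← Polynomial.C_eq_natCast, Polynomial.coeff_mul_C,
      Polynomial.coeff_X_pow]
    by_cases hc : c = 2*m
    · rw [if_pos hc, if_pos (by omega), one_mul]
    · rw [if_neg hc, if_neg (by omega), zero_mul]
  rw [Finset.sum_congr rfl term]
  by_cases hpar : c % 2 = 0
  · have e : ∀ m ∈ Finset.range (N+1),
        (if m = c/2 ∧ c % 2 = 0 then (N.choose m : F) else 0)
          = if m = c/2 then (N.choose m : F) else 0 := by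
      intro m _
      by_cases h : m = c/2
      · rw [if_pos ⟨h, hpar⟩, if_pos h]
      · rw [if_neg (by tauto), if_neg h]
    rw [Finset.sum_congr rfl e, Finset.sum_ite_eq' (Finset.range (N+1)) (c/2)
      (fun m => (N.choose m : F))]
    by_cases h2 : c/2 ∈ Finset.range (N+1)
    · rw [if_pos h2, if_pos hpar]
    · rw [if_neg h2, if_pos hpar]
      simp only [Finset.mem_range] at h2
      rw [Nat.choose_eq_zero_of_lt (by omega)]
      norm_num
  · rw [if_neg hpar]
    apply Finset.sum_eq_zero
    intro m _
    rw [if_neg (by tauto)]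

lemma wc_eq (n k p : ℕ) (hk : k ≤ n) (hp : p ≤ n) :
    (if (2*n - k - p) % 2 = 0 then ((n-p).choose ((2*n-k-p)/2) : ℤ) else 0) = wc n k p := by
  rw [wc]
  by_cases h1 : p ≤ k ∧ (k - p) % 2 = 0
  · rw [if_pos h1, if_pos (by omega)]
    norm_cast
    have e : (2*n-k-p)/2 = (n-p) - (k-p)/2 := by omega
    rw [e, Nat.choose_symm (by omega)]
  · rw [if_neg h1]
    by_cases h2 : (2*n-k-p) % 2 = 0
    · rw [if_pos h2]
      norm_cast
      exact Nat.choose_eq_zero_of_lt (by omega)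
    · rw [if_neg h2]

lemma esp (n k : ℕ) (hk : k ≤ n) :
    eSp n k = ∑ p ∈ Finset.range (n+1), (wc n k p : KK n) * eY n p := by
  classical
  have hcard : (Finset.univ : Finset (Fin n ⊕ Fin n)).card = 2*n := by
    rw [Finset.card_univ]
    simp [Fintype.card_sum]
    omega
  have h1 : (∏ a : Fin n ⊕ Fin n,
      (Polynomial.X + Polynomial.C (valsSp n a))).coeff (2*n - k) = eSp n k := by
    rw [Finset.prod_X_add_C_coeff Finset.univ (valsSp n) (by rw [hcard]; omega)]
    have e : (Finset.univ : Finset (Fin n ⊕ Fin n)).card - (2*n-k) = k := by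
      rw [hcard]; omega
    rw [e]
    rfl
  have h2 : (∏ a : Fin n ⊕ Fin n, (Polynomial.X + Polynomial.C (valsSp n a)))
      = ∏ j : Fin n,
        (Polynomial.C (yv n j) * Polynomial.X + (Polynomial.X^2 + 1)) := by
    rw [Fintype.prod_sum_type, ← Finset.prod_mul_distrib]
    refine Finset.prod_congr rfl fun j _ => ?_
    have hC : Polynomial.C (xv j) * Polynomial.C ((xv j)⁻¹) = 1 := by
      rw [← Polynomial.C_mul, mul_inv_cancel₀ (xv_ne_zero j), Polynomial.C_1]
    have hy : Polynomial.C (yv n j)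
        = Polynomial.C (xv j) + Polynomial.C ((xv j)⁻¹) := by
      rw [show yv n j = xv j + (xv j)⁻¹ from rfl, Polynomial.C_add]
    show (Polynomial.X + Polynomial.C (xv j)) * (Polynomial.X + Polynomial.C ((xv j)⁻¹)) = _
    rw [hy]
    have expand : (Polynomial.X + Polynomial.C (xv j)) * (Polynomial.X + Polynomial.C ((xv j)⁻¹))
        = (Polynomial.C (xv j) + Polynomial.C ((xv j)⁻¹)) * Polynomial.X
          + (Polynomial.X^2 + Polynomial.C (xv j) * Polynomial.C ((xv j)⁻¹)) := by ring
    rw [expand, hC]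
  have h3 : (∏ j : Fin n, (Polynomial.C (yv n j) * Polynomial.X + (Polynomial.X^2+1)))
      = ∑ t ∈ (Finset.univ : Finset (Fin n)).powerset,
          Polynomial.C (∏ j ∈ t, yv n j)
            * (Polynomial.X ^ t.card * (Polynomial.X^2+1)^(n - t.card)) := by
    have h3' := Finset.prod_add (fun j : Fin n => Polynomial.C (yv n j) * Polynomial.X)
      (fun _ : Fin n => (Polynomial.X^2+1)) Finset.univ
    beta_reduce at h3'
    rw [h3']
    refine Finset.sum_congr rfl fun t ht => ?_
    rw [Finset.prod_const, Finset.card_sdiff_of_subset (Finset.mem_powerset.mp ht),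
      Finset.card_univ, Fintype.card_fin, Finset.prod_mul_distrib, Finset.prod_const]
    have hCp : Polynomial.C (∏ j ∈ t, yv n j) = ∏ j ∈ t, Polynomial.C (yv n j) := by
      simp
    rw [hCp]
    ring
  rw [← h1, h2, h3, Polynomial.finset_sum_coeff]
  have h4 : ∀ t ∈ (Finset.univ : Finset (Fin n)).powerset,
      (Polynomial.C (∏ j ∈ t, yv n j)
        * (Polynomial.X ^ t.card * (Polynomial.X^2+1)^(n - t.card))).coeff (2*n - k)
      = (wc n k t.card : KK n) * ∏ j ∈ t, yv n j := by
    intro t ht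
    have htn : t.card ≤ n := by
      have := Finset.card_le_card (Finset.mem_powerset.mp ht)
      rwa [Finset.card_univ, Fintype.card_fin] at this
    rw [Polynomial.coeff_C_mul, mul_comm (Polynomial.X ^ t.card : Polynomial (KK n)),
      Polynomial.coeff_mul_X_pow', if_pos (show t.card ≤ 2*n - k by omega),
      coeff_sq_add_one]
    have e2 : (2*n - k - t.card) = (2*n - k) - t.card := rfl
    have key : (if (2*n - k - t.card) % 2 = 0
        then (((n - t.card).choose ((2*n - k - t.card)/2)) : KK n) else 0)
        = (wc n k t.card : KK n) := by
      rw [← wc_eq n k t.card hk htn]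
      by_cases h : (2*n - k - t.card) % 2 = 0
      · rw [if_pos h, if_pos h]
        push_cast
        rfl
      · rw [if_neg h, if_neg h, Int.cast_zero]
    rw [← key]
    ring
  rw [Finset.sum_congr rfl h4, Finset.sum_powerset, Finset.card_univ, Fintype.card_fin]
  refine Finset.sum_congr rfl fun p hp => ?_
  have e3 : ∀ t ∈ Finset.powersetCard p (Finset.univ : Finset (Fin n)),
      (wc n k t.card : KK n) * ∏ j ∈ t, yv n j
        = (wc n k p : KK n) * ∏ j ∈ t, yv n j := by
    intro t ht
    rw [(Finset.mem_powersetCard.mp ht).2]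
  rw [Finset.sum_congr rfl e3, ← Finset.mul_sum]
  rfl

lemma sum_bb (n k p : ℕ) (hk : k ≤ n) (hp : p ≤ n) :
    ∑ r ∈ Finset.range (k/2+1), bb (n-p) (n-(k-2*r)) = wc n k p := by
  by_cases hc : p ≤ k ∧ (k - p) % 2 = 0
  · obtain ⟨hpk, hpar⟩ := hc
    have term : ∀ r ∈ Finset.range (k/2+1),
        bb (n-p) (n-(k-2*r))
          = (fun r : ℕ => chZ (n-p) (((k-p)/2 : ℕ) - (r:ℤ))) r
            - (fun r : ℕ => chZ (n-p) (((k-p)/2 : ℕ) - (r:ℤ))) (r+1) := by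
      intro r hr
      simp only [Finset.mem_range] at hr
      dsimp only
      rcases Nat.lt_or_ge ((k-p)/2) r with hrS | hrS
      · rw [bb_zero_of_gt (show n-p < n-(k-2*r) by omega),
          chZ_neg (show (((k-p)/2 : ℕ) : ℤ) - (r:ℤ) < 0 by omega),
          chZ_neg (show (((k-p)/2 : ℕ) : ℤ) - ((r+1 : ℕ):ℤ) < 0 by omega)]
        ring
      · rw [bb_eval (n-p) (n-(k-2*r)) ((k-p)/2 - r) (by omega)]
        congr 1
        · congr 1; omega
        · congr 1; push_cast [Nat.cast_sub hrS]; ring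
    rw [Finset.sum_congr rfl term, Finset.sum_range_sub']
    rw [chZ_neg (show (((k-p)/2 : ℕ) : ℤ) - ((k/2+1 : ℕ):ℤ) < 0 by omega)]
    simp only [Nat.cast_zero, sub_zero]
    rw [chZ_nonneg, wc, if_pos ⟨hpk, hpar⟩]
  · rw [wc, if_neg hc]
    apply Finset.sum_eq_zero
    intro r hr
    simp only [Finset.mem_range] at hr
    rcases Nat.lt_or_ge k p with h1 | h1
    · exact bb_zero_of_gt (by omega)
    · have hodd : (k - p) % 2 = 1 := by omega
      rcases Nat.lt_or_ge (k - 2*r) p with h2 | h2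
      · exact bb_zero_of_gt (by omega)
      · exact bb_odd (by omega)

lemma PP_ne (n : ℕ) : PP n ≠ 0 := by
  rw [PP]
  apply Finset.prod_ne_zero_iff.mpr
  intro j _ heq
  have hx := xv_ne_zero j
  have h2 : xv j = (xv j)⁻¹ := sub_eq_zero.mp heq
  have h1 : xv j * xv j = 1 := by
    calc xv j * xv j = xv j * (xv j)⁻¹ := by rw [← h2]
    _ = 1 := mul_inv_cancel₀ hx
  have h3 : (MvPolynomial.X j * MvPolynomial.X j : MvPolynomial (Fin n) ℤ) = 1 := by
    apply IsFractionRing.injective (MvPolynomial (Fin n) ℤ) (KK n)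
    rw [map_mul, map_one]
    exact h1
  have h4 := congrArg (MvPolynomial.eval (fun _ => (2:ℤ))) h3
  simp at h4

lemma yv_ne {n : ℕ} {i j : Fin n} (hij : i ≠ j) : yv n i ≠ yv n j := by
  intro heq
  have hxi := xv_ne_zero i
  have hxj := xv_ne_zero j
  have e1 : (xv i + (xv i)⁻¹) * (xv i * xv j) = xv i * xv i * xv j + xv j := by
    field_simp
  have e2 : (xv j + (xv j)⁻¹) * (xv i * xv j) = xv j * xv j * xv i + xv i := by
    field_simp
  have key : xv i * xv i * xv j + xv j = xv j * xv j * xv i + xv i := by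
    rw [← e1, ← e2]
    simp only [yv] at heq
    rw [heq]
  have h3 : (MvPolynomial.X i * MvPolynomial.X i * MvPolynomial.X j + MvPolynomial.X j
      : MvPolynomial (Fin n) ℤ)
      = MvPolynomial.X j * MvPolynomial.X j * MvPolynomial.X i + MvPolynomial.X i := by
    apply IsFractionRing.injective (MvPolynomial (Fin n) ℤ) (KK n)
    rw [map_add, map_add, map_mul, map_mul, map_mul, map_mul]
    exact key
  have h4 := congrArg (MvPolynomial.eval (fun t => if t = i then (2:ℤ) else 3)) h3
  simp only [map_add, map_mul, MvPolynomial.eval_X, if_pos rfl, if_neg (Ne.symm hij)] at h4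
  norm_num at h4

lemma Ap0_ne (n : ℕ) : Ap n 0 ≠ 0 := by
  have hident : (Matrix.of fun i j : Fin n => yv n j ^ dI n 0 i)
      = ((Matrix.vandermonde (yv n)).transpose.submatrix (Fin.revPerm) id) := by
    ext i j
    simp only [Matrix.of_apply, Matrix.submatrix_apply, Matrix.transpose_apply,
      Matrix.vandermonde_apply, id, Fin.revPerm_apply]
    congr 1
    simp only [dI, Fin.val_rev]
    rw [if_neg (Nat.not_lt_zero _)]
    have := i.isLt
    omega
  rw [Ap, hident, Matrix.det_permute, Matrix.det_transpose, Matrix.det_vandermonde]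
  apply mul_ne_zero
  · rcases Int.units_eq_one_or (Equiv.Perm.sign (Fin.revPerm : Equiv.Perm (Fin n))) with h | h
      <;> rw [h] <;> norm_num
  · apply Finset.prod_ne_zero_iff.mpr
    intro i _
    apply Finset.prod_ne_zero_iff.mpr
    intro j hj
    have hij : i < j := Finset.mem_Ioi.mp hj
    exact sub_ne_zero.mpr (yv_ne (ne_of_gt hij))

end SpAux

/-- for `n ≥ k`, the character of `⋀^k` of the vector representation of
`Sp(2n)`, i.e. `e_k(x_1,…,x_n,x_1^{-1},…,x_n^{-1})`, equals
`Σ_{0 ≤ r ≤ k/2} char V^Sp_{(1^{k−2r})}`. -/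
theorem exterior_power_symplectic_decomposition (n k : ℕ) (h : k ≤ n) :
    eSp n k = ∑ r ∈ Finset.range (k / 2 + 1), charSp n (YPartition.colP (k - 2 * r)) := by
  classical
  have key : ∀ r ∈ Finset.range (k/2+1),
      charSp n (YPartition.colP (k - 2*r))
        = (SpAux.PP n * SpAux.Gm n (k - 2*r)) / (SpAux.PP n * SpAux.Ap n 0) := by
    intro r hr
    unfold charSp
    rw [SpAux.num_eq n (k - 2*r) (by omega), SpAux.den_eq n, SpAux.Gm0 n]
  rw [Finset.sum_congr rfl key, ← Finset.sum_div,
    eq_div_iff (mul_ne_zero (SpAux.PP_ne n) (SpAux.Ap0_ne n))]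
  have lhs : eSp n k * (SpAux.PP n * SpAux.Ap n 0)
      = SpAux.PP n * ∑ p ∈ Finset.range (n+1), (SpAux.wc n k p : KK n) * SpAux.Ap n p := by
    rw [SpAux.esp n k h, Finset.sum_mul, Finset.mul_sum]
    refine Finset.sum_congr rfl fun p hp => ?_
    have hpn : p ≤ n := by simp at hp; omega
    rw [show (SpAux.wc n k p : KK n) * SpAux.eY n p * (SpAux.PP n * SpAux.Ap n 0)
        = SpAux.PP n * ((SpAux.wc n k p : KK n) * (SpAux.Ap n 0 * SpAux.eY n p)) by ring,
      SpAux.pieri n p hpn]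
  have rhs : ∑ r ∈ Finset.range (k/2+1), SpAux.PP n * SpAux.Gm n (k - 2*r)
      = SpAux.PP n * ∑ p ∈ Finset.range (n+1), (SpAux.wc n k p : KK n) * SpAux.Ap n p := by
    rw [← Finset.mul_sum]
    congr 1
    have step : ∀ r ∈ Finset.range (k/2+1),
        SpAux.Gm n (k - 2*r)
          = ∑ p ∈ Finset.range (n+1), (SpAux.bb (n-p) (n-(k-2*r)) : KK n) * SpAux.Ap n p :=
      fun r hr => SpAux.dagger n (k - 2*r) (by omega)
    rw [Finset.sum_congr rfl step, Finset.sum_comm]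
    refine Finset.sum_congr rfl fun p hp => ?_
    rw [← Finset.sum_mul, ← SpAux.sum_bb n k p h (by simp at hp; omega)]
    push_cast
    ring
  rw [lhs, rhs]
end
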